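/- arXiv:1607.03066 — 5 statements merged into one kernel-verified Lean document; each statement's English description precedes it below -/
import Mathlib

section
/- Let C be a coassociative counital coalgebra over a field k and let E ⊆ C be a subcoalgebra such that the quotient coalgebra without counit C/E is conilpotent. Then for every nonzero left C-comodule M, the subcomodule _E M is nonzero. -/
open TensorProduct LinearMap

section Core

variable (k : Type) [Field k]
variable (C : Type) [AddCommGroup C] [Module k C] [Coalgebra k C]

/-- Axioms for a left `C`-comodule structure given by a coaction map `ρ`. -/
structure IsComod {M : Type} [AddCommGroup M] [Module k M]
    (ρ : M →ₗ[k] C ⊗[k] M) : Prop where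
  coassoc : ∀ m : M, (TensorProduct.assoc k C C M)
      ((CoalgebraStruct.comul (R := k) (A := C)).rTensor M (ρ m)) = ρ.lTensor C (ρ m)
  counit : ∀ m : M, (TensorProduct.lid k M)
      ((CoalgebraStruct.counit (R := k) (A := C)).rTensor M (ρ m)) = m

/-- A `k`-linear map between comodules is a comodule morphism. -/
def IsComodHom {M N : Type} [AddCommGroup M] [Module k M] [AddCommGroup N] [Module k N]
    (ρM : M →ₗ[k] C ⊗[k] M) (ρN : N →ₗ[k] C ⊗[k] N) (f : M →ₗ[k] N) : Prop :=
  f.lTensor C ∘ₗ ρM = ρN ∘ₗ f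

/-- The coaction of the cofree left comodule `C ⊗ V`. -/
noncomputable def cofreeCoaction (V : Type) [AddCommGroup V] [Module k V] :
    C ⊗[k] V →ₗ[k] C ⊗[k] (C ⊗[k] V) :=
  (TensorProduct.assoc k C C V).toLinearMap ∘ₗ
    (CoalgebraStruct.comul (R := k) (A := C)).rTensor V

/-- A left comodule is finitely cogenerated if it admits an injective comodule
morphism into a cofree comodule with finite-dimensional space of cogenerators. -/
def FinCogen {M : Type} [AddCommGroup M] [Module k M]
    (ρ : M →ₗ[k] C ⊗[k] M) : Prop :=
  ∃ (V : Type) (_ : AddCommGroup V) (_ : Module k V), FiniteDimensional k V ∧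
    ∃ f : M →ₗ[k] C ⊗[k] V, Function.Injective f ∧
      IsComodHom k C ρ (cofreeCoaction k C V) f

end Core

open TensorProduct LinearMap

section Conil

variable (k : Type) [Field k]
variable (C : Type) [AddCommGroup C] [Module k C] [Coalgebra k C]

/-- The image of `A ⊗ B` in `C ⊗ C`, for submodules `A B ⊆ C`. -/
noncomputable def tensorSub (A B : Submodule k C) : Submodule k (C ⊗[k] C) :=
  LinearMap.range (TensorProduct.map A.subtype B.subtype)

/-- `conilChain k C E n` is the kernel of the `n`-fold iterated comultiplication map
`C → (C/E)^{⊗ (n+1)}`. -/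
noncomputable def conilChain (E : Submodule k C) : ℕ → Submodule k C
  | 0 => E
  | n + 1 => Submodule.comap (CoalgebraStruct.comul (R := k) (A := C))
      (tensorSub k C E ⊤ ⊔ tensorSub k C ⊤ (conilChain E n))

/-- The quotient of `C` by the subcoalgebra `E` is a conilpotent coalgebra without
counit: every element is annihilated by some iterated comultiplication map
`C → (C/E)^{⊗ (n+1)}`. -/
def ConilpotentQuotient (E : Submodule k C) : Prop :=
  ∀ c : C, ∃ n : ℕ, c ∈ conilChain k C E n

variable {E : Type} [AddCommGroup E] [Module k E] [Coalgebra k E]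

/-- Given a subcoalgebra `ι : E → C` and a comodule coaction `ρ` on `M`, this is the
maximal subcomodule `_E M` of `M` whose comodule structure comes from an `E`-comodule
structure; it is the full preimage of `E ⊗ M` under the coaction map. -/
noncomputable def maxSubcomodule {M : Type} [AddCommGroup M] [Module k M]
    (ι : E →ₗc[k] C) (ρ : M →ₗ[k] C ⊗[k] M) : Submodule k M :=
  Submodule.comap ρ (LinearMap.range (ι.toLinearMap.rTensor M))

end Conil


section NakAux

open TensorProduct LinearMap

variable (k : Type) [Field k]
variable (C : Type) [AddCommGroup C] [Module k C] [Coalgebra k C]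

lemma tensorSub_mono_right (A : Submodule k C) {B B' : Submodule k C} (h : B ≤ B') :
    tensorSub k C A B ≤ tensorSub k C A B' := by
  have he : TensorProduct.map A.subtype B.subtype =
      TensorProduct.map A.subtype B'.subtype ∘ₗ
        TensorProduct.map (LinearMap.id) (Submodule.inclusion h) := by
    rw [← TensorProduct.map_comp]
    congr 1
  rw [tensorSub, he]
  exact LinearMap.range_comp_le_range _ _

variable {E : Type} [AddCommGroup E] [Module k E] [Coalgebra k E]

lemma conilChain_le_succ (ι : E →ₗc[k] C) (n : ℕ) :
    conilChain k C (LinearMap.range ι.toLinearMap) n ≤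
      conilChain k C (LinearMap.range ι.toLinearMap) (n + 1) := by
  induction n with
  | zero =>
    intro c hc
    obtain ⟨e, rfl⟩ := hc
    simp only [conilChain, Submodule.mem_comap]
    have h1 : Coalgebra.comul (ι.toLinearMap e) =
        TensorProduct.map ι.toLinearMap ι.toLinearMap (Coalgebra.comul e) := by
      have := CoalgHomClass.map_comp_comul ι
      exact (LinearMap.congr_fun this e).symm
    have h2 : TensorProduct.map ι.toLinearMap ι.toLinearMap (Coalgebra.comul e) ∈
        tensorSub k C ⊤ (LinearMap.range ι.toLinearMap) := by
      have heq : TensorProduct.map ι.toLinearMap ι.toLinearMap =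
          TensorProduct.map (⊤ : Submodule k C).subtype
              (LinearMap.range ι.toLinearMap).subtype ∘ₗ
            TensorProduct.map (LinearMap.codRestrict ⊤ ι.toLinearMap (fun _ => trivial))
              ι.toLinearMap.rangeRestrict := by
        rw [← TensorProduct.map_comp]
        congr 1
      refine LinearMap.mem_range.mpr ?_
      rw [heq]
      exact ⟨TensorProduct.map _ _ (Coalgebra.comul e), rfl⟩
    rw [h1]
    exact Submodule.mem_sup_right h2
  | succ n ih =>
    show Submodule.comap _ _ ≤ Submodule.comap _ _
    refine Submodule.comap_mono (sup_le_sup_left ?_ _)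
    exact tensorSub_mono_right k C ⊤ ih

lemma conilChain_mono (ι : E →ₗc[k] C) :
    Monotone (conilChain k C (LinearMap.range ι.toLinearMap)) :=
  monotone_nat_of_le_succ (conilChain_le_succ k C ι)

end NakAux

/-- **Nakayama's lemma for comodules** (Lemma 1.1).  Let `E ⊆ C` be a subcoalgebra,
given by an injective morphism of coalgebras `ι : E → C`, such that the quotient
coalgebra without counit `C/E` is conilpotent.  Then for every nonzero left
`C`-comodule `M` the maximal subcomodule `_E M` coming from an `E`-comodule
structure is nonzero. -/
theorem comodule_nakayama
    (k : Type) [Field k]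
    (C : Type) [AddCommGroup C] [Module k C] [Coalgebra k C]
    (E : Type) [AddCommGroup E] [Module k E] [Coalgebra k E]
    (ι : E →ₗc[k] C) (hι : Function.Injective ι)
    (hconil : ConilpotentQuotient k C (LinearMap.range ι.toLinearMap))
    (M : Type) [AddCommGroup M] [Module k M]
    (ρ : M →ₗ[k] C ⊗[k] M) (hM : IsComod k C ρ)
    (hMne : ∃ m : M, m ≠ 0) :
    maxSubcomodule k C ι ρ ≠ ⊥ := by
  intro hbot
  set Es : Submodule k C := LinearMap.range ι.toLinearMap with hEs
  set K : ℕ → Submodule k C := conilChain k C Es with hK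
  set N : ℕ → Submodule k M :=
    fun n => Submodule.comap ρ (LinearMap.ker (((K n).mkQ).rTensor M)) with hN
  have hKmono : Monotone K := conilChain_mono k C ι
  -- `maxSubcomodule` agrees with `N 0`
  have hrange : LinearMap.range (ι.toLinearMap.rTensor M)
      = LinearMap.ker (Es.mkQ.rTensor M) := by
    rw [rTensor_mkQ]
    have hdec : ι.toLinearMap = Es.subtype ∘ₗ ι.toLinearMap.rangeRestrict := rfl
    rw [hdec, LinearMap.rTensor_comp, LinearMap.range_comp,
      LinearMap.range_eq_top.mpr
        (LinearMap.rTensor_surjective M (g := ι.toLinearMap.rangeRestrict)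
          (LinearMap.surjective_rangeRestrict _)), Submodule.map_top]
  have hmax : maxSubcomodule k C ι ρ = N 0 := by
    rw [maxSubcomodule, hrange]
    rfl
  have hN0 : N 0 = ⊥ := by rw [← hmax]; exact hbot
  -- the inductive step
  have step : ∀ n : ℕ, N n = ⊥ → N (n + 1) = ⊥ := by
    intro n hn
    rw [Submodule.eq_bot_iff]
    intro m hm
    have hmker : ρ m ∈ LinearMap.ker (((K (n+1)).mkQ).rTensor M) := hm
    have hmem : ρ m ∈ LinearMap.range ((K (n+1)).subtype.rTensor M) := by
      rw [← rTensor_mkQ]; exact hmker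
    obtain ⟨y, hy⟩ := hmem
    set g : M →ₗ[k] (C ⧸ K n) ⊗[k] M := ((K n).mkQ.rTensor M) ∘ₗ ρ with hg
    have hginj : Function.Injective g := by
      rw [← LinearMap.ker_eq_bot, LinearMap.ker_comp]
      exact hn
    suffices h0 : Es.mkQ.rTensor M (ρ m) = 0 by
      have hm0 : m ∈ N 0 := h0
      rw [hN0, Submodule.mem_bot] at hm0
      exact hm0
    have hinj2 : Function.Injective ((g).lTensor (C ⧸ Es)) :=
      Module.Flat.lTensor_preserves_injective_linearMap g hginj
    apply hinj2
    rw [map_zero]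
    -- rewrite the LHS using coassociativity
    have hcomm : (g.lTensor (C ⧸ Es)) ∘ₗ (Es.mkQ.rTensor M)
        = (((K n).mkQ.rTensor M).lTensor (C ⧸ Es)) ∘ₗ
            (Es.mkQ.rTensor (C ⊗[k] M)) ∘ₗ (ρ.lTensor C) := by
      rw [hg, LinearMap.lTensor_comp, LinearMap.comp_assoc]
      congr 1
      rw [LinearMap.lTensor_comp_rTensor, LinearMap.rTensor_comp_lTensor]
    have hL : (g.lTensor (C ⧸ Es)) ((Es.mkQ.rTensor M) (ρ m))
        = (((K n).mkQ.rTensor M).lTensor (C ⧸ Es))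
            ((Es.mkQ.rTensor (C ⊗[k] M)) ((ρ.lTensor C) (ρ m))) :=
      LinearMap.congr_fun hcomm (ρ m)
    rw [hL, ← hM.coassoc m, ← hy]
    -- now everything is the image of `y` under a composite that vanishes
    set T : (K (n+1)) ⊗[k] M →ₗ[k] (C ⧸ Es) ⊗[k] ((C ⧸ K n) ⊗[k] M) :=
      (((K n).mkQ.rTensor M).lTensor (C ⧸ Es)) ∘ₗ
        (Es.mkQ.rTensor (C ⊗[k] M)) ∘ₗ
          (TensorProduct.assoc k C C M).toLinearMap ∘ₗ
            ((CoalgebraStruct.comul (R := k) (A := C)).rTensor M) ∘ₗ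
              ((K (n+1)).subtype.rTensor M) with hT
    have hTy : (((K n).mkQ.rTensor M).lTensor (C ⧸ Es))
        ((Es.mkQ.rTensor (C ⊗[k] M))
          ((TensorProduct.assoc k C C M)
            ((CoalgebraStruct.comul (R := k) (A := C)).rTensor M
              (((K (n+1)).subtype.rTensor M) y)))) = T y := rfl
    rw [hTy]
    have hT0 : T = 0 := by
      apply TensorProduct.ext'
      intro c x
      have hc : Coalgebra.comul (R := k) (c : C) ∈
          tensorSub k C Es ⊤ ⊔ tensorSub k C ⊤ (K n) := c.2
      rw [hT]
      simp only [LinearMap.coe_comp, Function.comp_apply, LinearMap.rTensor_tmul,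
        Submodule.coe_subtype, LinearEquiv.coe_coe, LinearMap.zero_apply]
      -- the remaining expression is linear in `comul c`
      set F : C ⊗[k] C →ₗ[k] (C ⧸ Es) ⊗[k] ((C ⧸ K n) ⊗[k] M) :=
        (((K n).mkQ.rTensor M).lTensor (C ⧸ Es)) ∘ₗ
          (Es.mkQ.rTensor (C ⊗[k] M)) ∘ₗ
            (TensorProduct.assoc k C C M).toLinearMap ∘ₗ
              ((TensorProduct.mk k (C ⊗[k] C) M).flip x) with hF
      have hFc : (((K n).mkQ.rTensor M).lTensor (C ⧸ Es))
          ((Es.mkQ.rTensor (C ⊗[k] M))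
            ((TensorProduct.assoc k C C M)
              ((CoalgebraStruct.comul (R := k) (A := C)) (c : C) ⊗ₜ[k] x)))
          = F ((CoalgebraStruct.comul (R := k) (A := C)) (c : C)) := rfl
      rw [hFc]
      have hker : tensorSub k C Es ⊤ ⊔ tensorSub k C ⊤ (K n) ≤ LinearMap.ker F := by
        refine sup_le ?_ ?_
        · rw [tensorSub]
          rw [LinearMap.range_le_ker_iff]
          apply TensorProduct.ext'
          intro e c'
          simp only [hF, LinearMap.coe_comp, Function.comp_apply,
            TensorProduct.map_tmul, Submodule.coe_subtype, LinearMap.flip_apply,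
            TensorProduct.mk_apply, LinearEquiv.coe_coe, TensorProduct.assoc_tmul,
            LinearMap.rTensor_tmul, LinearMap.lTensor_tmul, Submodule.mkQ_apply,
            LinearMap.zero_apply]
          rw [(Submodule.Quotient.mk_eq_zero Es).mpr e.2, TensorProduct.zero_tmul]
        · rw [tensorSub]
          rw [LinearMap.range_le_ker_iff]
          apply TensorProduct.ext'
          intro c' w
          simp only [hF, LinearMap.coe_comp, Function.comp_apply,
            TensorProduct.map_tmul, Submodule.coe_subtype, LinearMap.flip_apply,
            TensorProduct.mk_apply, LinearEquiv.coe_coe, TensorProduct.assoc_tmul,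
            LinearMap.rTensor_tmul, LinearMap.lTensor_tmul, Submodule.mkQ_apply,
            LinearMap.zero_apply]
          rw [(Submodule.Quotient.mk_eq_zero (K n)).mpr w.2, TensorProduct.zero_tmul,
            TensorProduct.tmul_zero]
      exact hker hc
    rw [hT0]
    rfl
  -- all `N n` vanish
  have hNall : ∀ n : ℕ, N n = ⊥ := by
    intro n
    induction n with
    | zero => exact hN0
    | succ n ih => exact step n ih
  -- every element lies in some `N n`
  have hall : ∀ m : M, ∃ n, m ∈ N n := by
    intro m
    suffices h : ∃ n, ((K n).mkQ.rTensor M) (ρ m) = 0 by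
      obtain ⟨n, h⟩ := h
      exact ⟨n, h⟩
    have hgen : ∀ z : C ⊗[k] M, ∃ n, ∀ n' ≥ n, ((K n').mkQ.rTensor M) z = 0 := by
      intro z
      induction z using TensorProduct.induction_on with
      | zero => exact ⟨0, fun n' _ => map_zero _⟩
      | tmul c x =>
        obtain ⟨n, hc⟩ := hconil c
        refine ⟨n, fun n' hn' => ?_⟩
        have hc' : c ∈ K n' := hKmono hn' hc
        rw [LinearMap.rTensor_tmul, Submodule.mkQ_apply,
          (Submodule.Quotient.mk_eq_zero (K n')).mpr hc', TensorProduct.zero_tmul]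
      | add a b ha hb =>
        obtain ⟨na, ha⟩ := ha
        obtain ⟨nb, hb⟩ := hb
        refine ⟨max na nb, fun n' hn' => ?_⟩
        rw [map_add, ha n' (le_trans (le_max_left _ _) hn'),
          hb n' (le_trans (le_max_right _ _) hn'), add_zero]
    obtain ⟨n, h⟩ := hgen (ρ m)
    exact ⟨n, h n le_rfl⟩
  obtain ⟨m, hm⟩ := hMne
  obtain ⟨n, hmn⟩ := hall m
  rw [hNall n, Submodule.mem_bot] at hmn
  exact hm hmn
end

section
/- Let C be a coassociative counital coalgebra over a field k. For any finitely cogenerated left C-comodule L and any subcoalgebra E ⊆ C, the left E-comodule _E L is finitely cogenerated. -/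
open TensorProduct LinearMap

open TensorProduct LinearMap

section ESub

variable (k : Type) [Field k]
variable (C : Type) [AddCommGroup C] [Module k C] [Coalgebra k C]
variable (E : Type) [AddCommGroup E] [Module k E] [Coalgebra k E]

/-- Given a subcoalgebra `ι : E → C`, a coaction `ρ` on `L`, a coaction `ρ'` of `E` on
the subspace `N = _E L` is *compatible* if the inclusion `_E L → L` intertwines `ρ'`
with `ρ` via `ι`.  Such a compatible coaction exists and is unique; it is the canonical
`E`-comodule structure on `_E L`. -/
def CompatibleECoaction {L : Type} [AddCommGroup L] [Module k L]
    (ι : E →ₗc[k] C) (ρ : L →ₗ[k] C ⊗[k] L) (N : Submodule k L)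
    (ρ' : N →ₗ[k] E ⊗[k] N) : Prop :=
  ∀ n : N, (TensorProduct.map ι.toLinearMap N.subtype) (ρ' n) = ρ (n : L)

end ESub

lemma lid_nat (k : Type) [Field k] {M N : Type} [AddCommGroup M] [Module k M]
    [AddCommGroup N] [Module k N] (f : M →ₗ[k] N) :
    (TensorProduct.lid k N).toLinearMap ∘ₗ f.lTensor k
      = f ∘ₗ (TensorProduct.lid k M).toLinearMap :=
  TensorProduct.ext' fun a m => by simp

/-- Lemma 1.2(a): for any finitely cogenerated left `C`-comodule `L` and any
subcoalgebra `E ⊆ C` (given by an injective morphism of coalgebras `ι : E → C`),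
the left `E`-comodule `_E L` (the maximal subcomodule of `L` whose comodule structure
comes from an `E`-comodule structure, endowed with its canonical `E`-coaction,
i.e. the unique one compatible with the coaction of `L`) is finitely cogenerated. -/
theorem maxSubcomodule_finCogen
    (k : Type) [Field k]
    (C : Type) [AddCommGroup C] [Module k C] [Coalgebra k C]
    (E : Type) [AddCommGroup E] [Module k E] [Coalgebra k E]
    (ι : E →ₗc[k] C) (hι : Function.Injective ι)
    (L : Type) [AddCommGroup L] [Module k L]
    (ρ : L →ₗ[k] C ⊗[k] L) (hL : IsComod k C ρ)
    (hfc : FinCogen k C ρ) :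
    ∃ ρ' : ↥(maxSubcomodule k C ι ρ) →ₗ[k] E ⊗[k] ↥(maxSubcomodule k C ι ρ),
      CompatibleECoaction k C E ι ρ (maxSubcomodule k C ι ρ) ρ' ∧
        IsComod k E ρ' ∧ FinCogen k E ρ' := by
  classical
  set ι' : E →ₗ[k] C := ι.toLinearMap with hι'def
  have hι'inj : Function.Injective ι' := hι
  set N : Submodule k L := maxSubcomodule k C ι ρ with hNdef
  set j : ↥N →ₗ[k] L := N.subtype with hjdef
  have hjinj : Function.Injective j := N.injective_subtype
  set T : E ⊗[k] ↥N →ₗ[k] C ⊗[k] L := TensorProduct.map ι' j with hTdef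
  have hTinj : Function.Injective T := by
    have h1 : Function.Injective (j.lTensor E) :=
      Module.Flat.lTensor_preserves_injective_linearMap j hjinj
    have h2 : Function.Injective (ι'.rTensor L) :=
      Module.Flat.rTensor_preserves_injective_linearMap ι' hι'inj
    have hT' : T = (ι'.rTensor L) ∘ₗ (j.lTensor E) := (rTensor_comp_lTensor _ ι' j).symm
    rw [hT', coe_comp]
    exact h2.comp h1
  have hmemN : ∀ n : ↥N, ρ (j n) ∈ LinearMap.range (ι'.rTensor L) := fun n => n.2
  -- quotient maps
  set p : C →ₗ[k] C ⧸ (LinearMap.range ι') := (LinearMap.range ι').mkQ with hpdef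
  set q : L →ₗ[k] L ⧸ N := N.mkQ with hqdef
  have hexCL : Function.Exact (ι'.rTensor L) (p.rTensor L) :=
    Module.Flat.rTensor_exact L (LinearMap.exact_map_mkQ_range ι')
  have hexNC : Function.Exact (j.lTensor C) (q.lTensor C) :=
    Module.Flat.lTensor_exact C (LinearMap.exact_subtype_mkQ N)
  have hexNE : Function.Exact (j.lTensor E) (q.lTensor E) :=
    Module.Flat.lTensor_exact E (LinearMap.exact_subtype_mkQ N)
  set F : L →ₗ[k] (C ⧸ LinearMap.range ι') ⊗[k] L := (p.rTensor L) ∘ₗ ρ with hFdef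
  have hkerF : LinearMap.ker F = N := by
    ext l
    rw [LinearMap.mem_ker, show F l = (p.rTensor L) (ρ l) from rfl, hexCL (ρ l)]
    exact Iff.rfl
  set F' : (L ⧸ N) →ₗ[k] (C ⧸ LinearMap.range ι') ⊗[k] L := N.liftQ F hkerF.ge with hF'def
  have hF'q : F' ∘ₗ q = F := N.liftQ_mkQ F hkerF.ge
  have hF'inj : Function.Injective F' := by
    rw [← LinearMap.ker_eq_bot]
    exact Submodule.ker_liftQ_eq_bot _ _ _ hkerF.le
  have hpι : p ∘ₗ ι' = 0 := by
    ext e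
    simp [hpdef, Submodule.Quotient.mk_eq_zero]
  -- key membership
  have hmem : ∀ n : ↥N, ρ (j n) ∈ LinearMap.range T := by
    intro n
    obtain ⟨x, hx⟩ := hmemN n
    -- (F.lTensor C) (ρ (j n)) = 0
    have hFl : (F.lTensor C) (ρ (j n)) = 0 := by
      have e1 : (F.lTensor C) (ρ (j n)) = ((p.rTensor L).lTensor C) ((ρ.lTensor C) (ρ (j n))) := by
        rw [hFdef, lTensor_comp]; rfl
      rw [e1, ← hL.coassoc (j n), ← hx]
      have e2 : (CoalgebraStruct.comul (R := k) (A := C)).rTensor L ∘ₗ ι'.rTensor L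
          = ((TensorProduct.map ι' ι').rTensor L) ∘ₗ
            ((CoalgebraStruct.comul (R := k) (A := E)).rTensor L) := by
        have hcomul : (CoalgebraStruct.comul (R := k) (A := C)) ∘ₗ ι'
            = TensorProduct.map ι' ι' ∘ₗ CoalgebraStruct.comul := by
          rw [hι'def, CoalgHom.toLinearMap_eq_coe]
          exact (CoalgHomClass.map_comp_comul ι).symm
        rw [← rTensor_comp, ← rTensor_comp, hcomul]
      rw [show (CoalgebraStruct.comul (R := k) (A := C)).rTensor L ((ι'.rTensor L) x)
            = ((TensorProduct.map ι' ι').rTensor L)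
              (((CoalgebraStruct.comul (R := k) (A := E)).rTensor L) x) from
          LinearMap.congr_fun e2 x]
      set y := ((CoalgebraStruct.comul (R := k) (A := E)).rTensor L) x with hy
      have e3 : (TensorProduct.map ι' (TensorProduct.map ι' LinearMap.id)) ∘ₗ
            (TensorProduct.assoc k E E L).toLinearMap
          = (TensorProduct.assoc k C C L).toLinearMap ∘ₗ
            (TensorProduct.map (TensorProduct.map ι' ι') LinearMap.id) :=
        TensorProduct.map_map_comp_assoc_eq ι' ι' LinearMap.id
      have e3' : (TensorProduct.assoc k C C L) (((TensorProduct.map ι' ι').rTensor L) y)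
          = (TensorProduct.map ι' (TensorProduct.map ι' LinearMap.id))
              ((TensorProduct.assoc k E E L) y) :=
        (LinearMap.congr_fun e3 y).symm
      rw [e3']
      have e4 : ((p.rTensor L).lTensor C) ∘ₗ
          (TensorProduct.map ι' (TensorProduct.map ι' LinearMap.id)) = 0 := by
        rw [lTensor_comp_map _ _ _ _, rTensor_comp_map _ _ _ _, hpι]
        ext a b
        simp
      exact LinearMap.congr_fun e4 _
    have hq0 : (q.lTensor C) (ρ (j n)) = 0 := by
      apply Module.Flat.lTensor_preserves_injective_linearMap (M := C) F' hF'inj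
      rw [map_zero]
      have : (F'.lTensor C) ((q.lTensor C) (ρ (j n))) = (F.lTensor C) (ρ (j n)) := by
        rw [← hF'q, lTensor_comp]; rfl
      rw [this, hFl]
    have hq0x : (q.lTensor E) x = 0 := by
      apply Module.Flat.rTensor_preserves_injective_linearMap (M := L ⧸ N) ι' hι'inj
      rw [map_zero]
      have e5 : (ι'.rTensor (L ⧸ N)) ((q.lTensor E) x) = (q.lTensor C) ((ι'.rTensor L) x) := by
        rw [← LinearMap.comp_apply, ← LinearMap.comp_apply, rTensor_comp_lTensor,
          lTensor_comp_rTensor]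
      rw [e5, hx, hq0]
    obtain ⟨w, hw⟩ := (hexNE x).mp hq0x
    refine ⟨w, ?_⟩
    have : T w = (ι'.rTensor L) ((j.lTensor E) w) := by
      rw [← LinearMap.comp_apply, rTensor_comp_lTensor]
    rw [this, hw, hx]
  -- the canonical E-coaction on N
  set ρ' : ↥N →ₗ[k] E ⊗[k] ↥N :=
    (LinearEquiv.ofInjective T hTinj).symm.toLinearMap ∘ₗ
      LinearMap.codRestrict (LinearMap.range T) (ρ ∘ₗ j) hmem with hρ'def
  have hTρ' : ∀ n : ↥N, T (ρ' n) = ρ (j n) := by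
    intro n
    rw [hρ'def]
    simp only [LinearMap.coe_comp, Function.comp_apply, LinearEquiv.coe_toLinearMap]
    rw [LinearEquiv.ofInjective_symm_apply]
    simp
  have hcompat : CompatibleECoaction k C E ι ρ N ρ' := by
    intro n
    have := hTρ' n
    rw [hTdef] at this
    exact this
  -- counit and comul compatibilities of ι
  have hcounitι : (CoalgebraStruct.counit (R := k) (A := C)) ∘ₗ ι'
      = CoalgebraStruct.counit (R := k) (A := E) := by
    rw [hι'def, CoalgHom.toLinearMap_eq_coe]
    exact CoalgHomClass.counit_comp ι
  have hcomulι : (CoalgebraStruct.comul (R := k) (A := C)) ∘ₗ ι'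
      = TensorProduct.map ι' ι' ∘ₗ CoalgebraStruct.comul := by
    rw [hι'def, CoalgHom.toLinearMap_eq_coe]
    exact (CoalgHomClass.map_comp_comul ι).symm
  -- ρ' is a comodule structure
  have hcomod : IsComod k E ρ' := by
    constructor
    · -- coassociativity
      intro n
      set Φ : E ⊗[k] (E ⊗[k] ↥N) →ₗ[k] C ⊗[k] (C ⊗[k] L) := TensorProduct.map ι' T with hΦdef
      have hΦinj : Function.Injective Φ := by
        have h1 : Function.Injective (T.lTensor E) :=
          Module.Flat.lTensor_preserves_injective_linearMap T hTinj
        have h2 : Function.Injective (ι'.rTensor (C ⊗[k] L)) :=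
          Module.Flat.rTensor_preserves_injective_linearMap ι' hι'inj
        have hΦ' : Φ = (ι'.rTensor (C ⊗[k] L)) ∘ₗ (T.lTensor E) :=
          (rTensor_comp_lTensor _ ι' T).symm
        rw [hΦ', coe_comp]
        exact h2.comp h1
      apply hΦinj
      -- RHS
      have hrhs : Φ (ρ'.lTensor E (ρ' n)) = ρ.lTensor C (ρ (j n)) := by
        have c1 : Φ ∘ₗ ρ'.lTensor E = TensorProduct.map ι' (T ∘ₗ ρ') := by
          rw [hΦdef, map_comp_lTensor]
        have c2 : TensorProduct.map ι' (T ∘ₗ ρ') (ρ' n) = ρ.lTensor C (T (ρ' n)) := by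
          have : ρ.lTensor C ∘ₗ T = TensorProduct.map ι' (ρ ∘ₗ j) := by
            rw [hTdef, lTensor_comp_map]
          rw [LinearMap.ext_iff.mp (LinearMap.ext fun z => rfl),
            show TensorProduct.map ι' (T ∘ₗ ρ') (ρ' n)
              = TensorProduct.map ι' (ρ ∘ₗ j) (ρ' n) from by
                congr 1
                ext z
                simp [hTρ']]
          rw [← this]
          rfl
        calc Φ (ρ'.lTensor E (ρ' n)) = (Φ ∘ₗ ρ'.lTensor E) (ρ' n) := rfl
          _ = TensorProduct.map ι' (T ∘ₗ ρ') (ρ' n) := by rw [c1]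
          _ = ρ.lTensor C (T (ρ' n)) := c2
          _ = ρ.lTensor C (ρ (j n)) := by rw [hTρ']
      -- LHS
      have hlhs : Φ ((TensorProduct.assoc k E E ↥N)
            ((CoalgebraStruct.comul (R := k) (A := E)).rTensor ↥N (ρ' n)))
          = ρ.lTensor C (ρ (j n)) := by
        have e3 : (TensorProduct.map ι' T) ∘ₗ (TensorProduct.assoc k E E ↥N).toLinearMap
            = (TensorProduct.assoc k C C L).toLinearMap ∘ₗ
              (TensorProduct.map (TensorProduct.map ι' ι') j) := by
          rw [hTdef]
          exact TensorProduct.map_map_comp_assoc_eq ι' ι' j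
        have e4 : (TensorProduct.map (TensorProduct.map ι' ι') j) ∘ₗ
              ((CoalgebraStruct.comul (R := k) (A := E)).rTensor ↥N)
            = ((CoalgebraStruct.comul (R := k) (A := C)).rTensor L) ∘ₗ T := by
          rw [hTdef, map_comp_rTensor, rTensor_comp_map, hcomulι]
        calc Φ ((TensorProduct.assoc k E E ↥N)
              ((CoalgebraStruct.comul (R := k) (A := E)).rTensor ↥N (ρ' n)))
            = (TensorProduct.assoc k C C L) ((TensorProduct.map (TensorProduct.map ι' ι') j)
                ((CoalgebraStruct.comul (R := k) (A := E)).rTensor ↥N (ρ' n))) := by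
              rw [hΦdef]
              exact LinearMap.congr_fun e3 _
          _ = (TensorProduct.assoc k C C L)
                ((CoalgebraStruct.comul (R := k) (A := C)).rTensor L (T (ρ' n))) := by
              rw [← LinearMap.comp_apply, e4]; rfl
          _ = (TensorProduct.assoc k C C L)
                ((CoalgebraStruct.comul (R := k) (A := C)).rTensor L (ρ (j n))) := by
              rw [hTρ']
          _ = ρ.lTensor C (ρ (j n)) := hL.coassoc (j n)
      rw [hlhs, hrhs]
    · -- counit
      intro n
      apply hjinj
      have e5 : j ∘ₗ (TensorProduct.lid k ↥N).toLinearMap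
          = (TensorProduct.lid k L).toLinearMap ∘ₗ (j.lTensor k) := (lid_nat k j).symm
      have e6 : (j.lTensor k) ∘ₗ ((CoalgebraStruct.counit (R := k) (A := E)).rTensor ↥N)
          = ((CoalgebraStruct.counit (R := k) (A := C)).rTensor L) ∘ₗ T := by
        rw [hTdef, lTensor_comp_rTensor, rTensor_comp_map, hcounitι]
      calc j ((TensorProduct.lid k ↥N)
            ((CoalgebraStruct.counit (R := k) (A := E)).rTensor ↥N (ρ' n)))
          = (TensorProduct.lid k L) ((j.lTensor k)
              ((CoalgebraStruct.counit (R := k) (A := E)).rTensor ↥N (ρ' n))) :=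
            LinearMap.congr_fun e5 _
        _ = (TensorProduct.lid k L)
              ((CoalgebraStruct.counit (R := k) (A := C)).rTensor L (T (ρ' n))) := by
            rw [← LinearMap.comp_apply, e6]; rfl
        _ = (TensorProduct.lid k L)
              ((CoalgebraStruct.counit (R := k) (A := C)).rTensor L (ρ (j n))) := by
            rw [hTρ']
        _ = j n := hL.counit (j n)
  refine ⟨ρ', hcompat, hcomod, ?_⟩
  -- finite cogeneration
  obtain ⟨V, _, _, hVfd, f, hfinj, hfhom⟩ := hfc
  refine ⟨V, inferInstance, inferInstance, hVfd, ?_⟩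
  set f₀ : L →ₗ[k] V := (TensorProduct.lid k V).toLinearMap ∘ₗ
    ((CoalgebraStruct.counit (R := k) (A := C)).rTensor V) ∘ₗ f with hf₀def
  -- key : (lTensor C f₀) ∘ ρ = f
  have hkey : f₀.lTensor C ∘ₗ ρ = f := by
    have h1 : f₀.lTensor C ∘ₗ ρ
        = ((TensorProduct.lid k V).toLinearMap.lTensor C) ∘ₗ
          (((CoalgebraStruct.counit (R := k) (A := C)).rTensor V).lTensor C) ∘ₗ
          (f.lTensor C ∘ₗ ρ) := by
      rw [hf₀def, lTensor_comp, lTensor_comp]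
      rfl
    rw [h1, hfhom]
    have h2 : ((TensorProduct.lid k V).toLinearMap.lTensor C) ∘ₗ
          (((CoalgebraStruct.counit (R := k) (A := C)).rTensor V).lTensor C) ∘ₗ
          cofreeCoaction k C V = LinearMap.id := by
      have e1 : (((CoalgebraStruct.counit (R := k) (A := C)).rTensor V).lTensor C) ∘ₗ
            (TensorProduct.assoc k C C V).toLinearMap
          = (TensorProduct.assoc k C k V).toLinearMap ∘ₗ
            (((CoalgebraStruct.counit (R := k) (A := C)).lTensor C).rTensor V) := by
        have := TensorProduct.map_map_comp_assoc_eq (LinearMap.id (R := k) (M := C))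
          (CoalgebraStruct.counit (R := k) (A := C)) (LinearMap.id (R := k) (M := V))
        simpa [LinearMap.lTensor, LinearMap.rTensor] using this
      have e2 : ((CoalgebraStruct.counit (R := k) (A := C)).lTensor C).rTensor V ∘ₗ
            ((CoalgebraStruct.comul (R := k) (A := C)).rTensor V)
          = ((TensorProduct.mk k C k).flip 1).rTensor V := by
        rw [← rTensor_comp, Coalgebra.lTensor_counit_comp_comul]
      have e3 : ((TensorProduct.lid k V).toLinearMap.lTensor C) ∘ₗ
            (TensorProduct.assoc k C k V).toLinearMap ∘ₗ
            (((TensorProduct.mk k C k).flip 1).rTensor V) = LinearMap.id :=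
        TensorProduct.ext' fun c v => by simp
      calc ((TensorProduct.lid k V).toLinearMap.lTensor C) ∘ₗ
            (((CoalgebraStruct.counit (R := k) (A := C)).rTensor V).lTensor C) ∘ₗ
            cofreeCoaction k C V
          = ((TensorProduct.lid k V).toLinearMap.lTensor C) ∘ₗ
            ((((CoalgebraStruct.counit (R := k) (A := C)).rTensor V).lTensor C) ∘ₗ
              (TensorProduct.assoc k C C V).toLinearMap) ∘ₗ
            ((CoalgebraStruct.comul (R := k) (A := C)).rTensor V) := by
            rw [cofreeCoaction]; rfl
        _ = ((TensorProduct.lid k V).toLinearMap.lTensor C) ∘ₗ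
            (TensorProduct.assoc k C k V).toLinearMap ∘ₗ
            ((((CoalgebraStruct.counit (R := k) (A := C)).lTensor C).rTensor V) ∘ₗ
              ((CoalgebraStruct.comul (R := k) (A := C)).rTensor V)) := by
            rw [e1]; rfl
        _ = ((TensorProduct.lid k V).toLinearMap.lTensor C) ∘ₗ
            (TensorProduct.assoc k C k V).toLinearMap ∘ₗ
            (((TensorProduct.mk k C k).flip 1).rTensor V) := by rw [e2]
        _ = LinearMap.id := e3
    ext l
    simpa using LinearMap.congr_fun h2 (f l)
  set g : ↥N →ₗ[k] E ⊗[k] V := (f₀ ∘ₗ j).lTensor E ∘ₗ ρ' with hgdef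
  have hgaux : ∀ n : ↥N, (ι'.rTensor V) (g n) = f (j n) := by
    intro n
    have c1 : (ι'.rTensor V) ∘ₗ ((f₀ ∘ₗ j).lTensor E) = (f₀.lTensor C) ∘ₗ T := by
      rw [hTdef, rTensor_comp_lTensor, lTensor_comp_map]
    calc (ι'.rTensor V) (g n) = ((ι'.rTensor V) ∘ₗ ((f₀ ∘ₗ j).lTensor E)) (ρ' n) := rfl
      _ = (f₀.lTensor C) (T (ρ' n)) := by rw [c1]; rfl
      _ = (f₀.lTensor C) (ρ (j n)) := by rw [hTρ']
      _ = f (j n) := LinearMap.congr_fun hkey (j n)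
  refine ⟨g, ?_, ?_⟩
  · intro n n' h
    apply hjinj
    apply hfinj
    rw [← hgaux, ← hgaux, h]
  · -- comodule homomorphism
    rw [IsComodHom]
    have hco' : (TensorProduct.assoc k E E ↥N).toLinearMap ∘ₗ
          ((CoalgebraStruct.comul (R := k) (A := E)).rTensor ↥N) ∘ₗ ρ'
        = ρ'.lTensor E ∘ₗ ρ' := LinearMap.ext fun n => hcomod.coassoc n
    have d1 : ((CoalgebraStruct.comul (R := k) (A := E)).rTensor V) ∘ₗ ((f₀ ∘ₗ j).lTensor E)
        = (((f₀ ∘ₗ j).lTensor (E ⊗[k] E))) ∘ₗ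
          ((CoalgebraStruct.comul (R := k) (A := E)).rTensor ↥N) := by
      rw [rTensor_comp_lTensor, lTensor_comp_rTensor]
    have d2 : (TensorProduct.assoc k E E V).toLinearMap ∘ₗ ((f₀ ∘ₗ j).lTensor (E ⊗[k] E))
        = (((f₀ ∘ₗ j).lTensor E).lTensor E) ∘ₗ (TensorProduct.assoc k E E ↥N).toLinearMap := by
      have := TensorProduct.map_map_comp_assoc_eq (LinearMap.id (R := k) (M := E))
        (LinearMap.id (R := k) (M := E)) (f₀ ∘ₗ j)
      simpa [LinearMap.lTensor, LinearMap.rTensor, TensorProduct.map_id] using this.symm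
    calc g.lTensor E ∘ₗ ρ' = (((f₀ ∘ₗ j).lTensor E).lTensor E) ∘ₗ (ρ'.lTensor E) ∘ₗ ρ' := by
          rw [hgdef, lTensor_comp]; rfl
      _ = (((f₀ ∘ₗ j).lTensor E).lTensor E) ∘ₗ (TensorProduct.assoc k E E ↥N).toLinearMap ∘ₗ
            ((CoalgebraStruct.comul (R := k) (A := E)).rTensor ↥N) ∘ₗ ρ' := by rw [hco']
      _ = (TensorProduct.assoc k E E V).toLinearMap ∘ₗ ((f₀ ∘ₗ j).lTensor (E ⊗[k] E)) ∘ₗ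
            ((CoalgebraStruct.comul (R := k) (A := E)).rTensor ↥N) ∘ₗ ρ' := by
          rw [← LinearMap.comp_assoc, ← d2]; rfl
      _ = (TensorProduct.assoc k E E V).toLinearMap ∘ₗ
            ((CoalgebraStruct.comul (R := k) (A := E)).rTensor V) ∘ₗ ((f₀ ∘ₗ j).lTensor E) ∘ₗ
            ρ' := by
          rw [← LinearMap.comp_assoc ρ', ← d1]; rfl
      _ = cofreeCoaction k E V ∘ₗ g := by
          rw [cofreeCoaction, hgdef]; rfl
end

section
/- Let C be a nonzero coassociative counital coalgebra over a field k and V an infinite-dimensional k-vector space. Then the cofree left C-comodule C ⊗_k V is not finitely cogenerated. -/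
open TensorProduct LinearMap

section Aux

variable (k : Type) [Field k]
variable (C : Type) [AddCommGroup C] [Module k C] [Coalgebra k C]

/-- auxiliary: counit identity for the cofree coaction -/
lemma cofree_counit_aux (W : Type) [AddCommGroup W] [Module k W] (x : C ⊗[k] W) :
    (((TensorProduct.lid k W).toLinearMap ∘ₗ
      (CoalgebraStruct.counit (R := k) (A := C)).rTensor W).lTensor C)
      ((TensorProduct.assoc k C C W)
        ((CoalgebraStruct.comul (R := k) (A := C)).rTensor W x)) = x := by
  induction x using TensorProduct.induction_on with
  | zero => simp
  | add x y hx hy => simp only [map_add, hx, hy]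
  | tmul c w =>
    set r := Coalgebra.Repr.arbitrary k c
    have h1 : (CoalgebraStruct.comul (R := k) (A := C)).rTensor W (c ⊗ₜ[k] w)
        = (∑ i ∈ r.index, r.left i ⊗ₜ[k] r.right i) ⊗ₜ[k] w := by
      rw [rTensor_tmul, r.eq]
    rw [h1, TensorProduct.sum_tmul, map_sum, map_sum]
    have h2 : ∀ i, (((TensorProduct.lid k W).toLinearMap ∘ₗ
        (CoalgebraStruct.counit (R := k) (A := C)).rTensor W).lTensor C)
        ((TensorProduct.assoc k C C W) ((r.left i ⊗ₜ[k] r.right i) ⊗ₜ[k] w))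
        = r.left i ⊗ₜ[k] ((CoalgebraStruct.counit (R := k) (A := C)) (r.right i) • w) := by
      intro i
      simp [TensorProduct.assoc_tmul, lTensor_tmul, TensorProduct.smul_tmul']
    simp_rw [h2]
    have h3 : (∑ i ∈ r.index, r.left i ⊗ₜ[k]
        ((CoalgebraStruct.counit (R := k) (A := C)) (r.right i))) = c ⊗ₜ[k] (1 : k) :=
      Coalgebra.sum_tmul_counit_eq (R := k) r
    have h4 := congrArg (LinearMap.lTensor C (LinearMap.toSpanSingleton k W w)) h3
    rw [map_sum] at h4
    simp only [lTensor_tmul, toSpanSingleton_apply, one_smul] at h4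
    exact h4

end Aux

private theorem not_finCogen_aux
    (k : Type) [Field k]
    (C : Type) [AddCommGroup C] [Module k C] [Coalgebra k C] [Nontrivial C]
    (V : Type) [AddCommGroup V] [Module k V]
    (hV : ¬ FiniteDimensional k V)
    (W : Type) (iW1 : AddCommGroup W) (iW2 : Module k W) (hW : FiniteDimensional k W)
    (f : C ⊗[k] V →ₗ[k] C ⊗[k] W) (hf : Function.Injective f)
    (hcomod : f.lTensor C ∘ₗ
      ((TensorProduct.assoc k C C V).toLinearMap ∘ₗ
        (CoalgebraStruct.comul (R := k) (A := C)).rTensor V) =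
      ((TensorProduct.assoc k C C W).toLinearMap ∘ₗ
        (CoalgebraStruct.comul (R := k) (A := C)).rTensor W) ∘ₗ f) : False := by
  obtain ⟨c, hc⟩ := exists_ne (0 : C)
  set q : C ⊗[k] W →ₗ[k] W := (TensorProduct.lid k W).toLinearMap ∘ₗ
    (CoalgebraStruct.counit (R := k) (A := C)).rTensor W with hq
  have key : ∀ x : C ⊗[k] V, f x = (q ∘ₗ f).lTensor C
      ((TensorProduct.assoc k C C V)
        ((CoalgebraStruct.comul (R := k) (A := C)).rTensor V x)) := by
    intro x
    have h1 := LinearMap.congr_fun hcomod x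
    simp only [LinearMap.comp_apply, LinearEquiv.coe_coe] at h1
    calc f x = (q.lTensor C) ((TensorProduct.assoc k C C W)
        ((CoalgebraStruct.comul (R := k) (A := C)).rTensor W (f x))) :=
          (cofree_counit_aux k C W (f x)).symm
    _ = q.lTensor C (f.lTensor C ((TensorProduct.assoc k C C V)
        ((CoalgebraStruct.comul (R := k) (A := C)).rTensor V x))) := by rw [h1]
    _ = _ := by rw [← LinearMap.comp_apply, ← LinearMap.lTensor_comp]
  set r := Coalgebra.Repr.arbitrary k c
  let S : Submodule k (C ⊗[k] W) :=
    r.index.sup fun i => LinearMap.range (TensorProduct.mk k C W (r.left i))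
  have hmem : ∀ v : V, f (c ⊗ₜ[k] v) ∈ S := by
    intro v
    rw [key]
    have h1 : (CoalgebraStruct.comul (R := k) (A := C)).rTensor V (c ⊗ₜ[k] v)
        = (∑ i ∈ r.index, r.left i ⊗ₜ[k] r.right i) ⊗ₜ[k] v := by rw [rTensor_tmul, r.eq]
    rw [h1, TensorProduct.sum_tmul, map_sum, map_sum]
    refine Submodule.sum_mem _ fun i hi => ?_
    have h2 : ((q ∘ₗ f).lTensor C) ((TensorProduct.assoc k C C V)
        ((r.left i ⊗ₜ[k] r.right i) ⊗ₜ[k] v))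
        = TensorProduct.mk k C W (r.left i) ((q ∘ₗ f) (r.right i ⊗ₜ[k] v)) := by
      simp [TensorProduct.assoc_tmul]
    rw [h2]
    exact Finset.le_sup (f := fun i => LinearMap.range (TensorProduct.mk k C W (r.left i)))
      hi ⟨_, rfl⟩
  haveI := hW
  let φ : V →ₗ[k] S := LinearMap.codRestrict S (f ∘ₗ
    ((TensorProduct.mk k C V) c)) hmem
  have hφ : Function.Injective φ := by
    intro v v' hvv'
    have h2 : c ⊗ₜ[k] v = c ⊗ₜ[k] v' := hf (congrArg Subtype.val hvv')
    obtain ⟨ψ, hψ⟩ : ∃ ψ : Module.Dual k C, ψ c ≠ 0 := by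
      by_contra h
      push_neg at h
      exact hc ((Module.forall_dual_apply_eq_zero_iff k c).mp h)
    have h3 := congrArg (fun z => (TensorProduct.lid k V) ((ψ.rTensor V) z)) h2
    simp only [rTensor_tmul, TensorProduct.lid_tmul] at h3
    exact smul_right_injective V hψ h3
  exact hV (FiniteDimensional.of_injective φ hφ)


/-- Lemma 1.2(b): the cofree left comodule `C ⊗ V` on an infinite-dimensional vector
space of cogenerators `V` over a nonzero coalgebra `C` is not finitely cogenerated. -/
theorem cofree_infinite_not_finCogen
    (k : Type) [Field k]
    (C : Type) [AddCommGroup C] [Module k C] [Coalgebra k C] [Nontrivial C]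
    (V : Type) [AddCommGroup V] [Module k V]
    (hV : ¬ FiniteDimensional k V) :
    ¬ FinCogen k C (cofreeCoaction k C V) := by
  rintro ⟨W, iW1, iW2, hW, f, hf, hcomod⟩
  exact not_finCogen_aux k C V hV W iW1 iW2 hW f hf hcomod
end

section
/- Let C be a coassociative counital coalgebra over a field k and E ⊆ C a subcoalgebra such that the quotient coalgebra without counit C/E is conilpotent. Then a left C-comodule L is finitely cogenerated if and only if the left E-comodule _E L is finitely cogenerated. -/
open TensorProduct LinearMap

open TensorProduct LinearMap

namespace PAux



variable {k : Type} [Field k]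
variable {A M N P Q : Type} [AddCommGroup A] [Module k A] [AddCommGroup M] [Module k M]
  [AddCommGroup N] [Module k N] [AddCommGroup P] [Module k P] [AddCommGroup Q] [Module k Q]

/-- kernel of lTensor of a map -/
lemma mem_range_lT_ker {h : M →ₗ[k] N} {x : A ⊗[k] M} (hx : h.lTensor A x = 0) :
    x ∈ range ((ker h).subtype.lTensor A) := by
  have := (Module.Flat.lTensor_exact A (LinearMap.exact_subtype_ker_map h)) x
  rw [mem_range]
  exact this.mp hx

lemma mem_range_rT_ker {h : M →ₗ[k] N} {x : M ⊗[k] A} (hx : h.rTensor A x = 0) :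
    x ∈ range ((ker h).subtype.rTensor A) := by
  have := (Module.Flat.rTensor_exact A (LinearMap.exact_subtype_ker_map h)) x
  rw [mem_range]
  exact this.mp hx

lemma rT_mkQ_eq_zero {S : Submodule k M} {x : M ⊗[k] A}
    (hx : x ∈ range (S.subtype.rTensor A)) : S.mkQ.rTensor A x = 0 := by
  obtain ⟨y, rfl⟩ := hx
  rw [← LinearMap.comp_apply, ← rTensor_comp]
  have : S.mkQ.comp S.subtype = 0 := by ext s; simp
  rw [this]
  simp [rTensor_zero]

lemma lT_mkQ_eq_zero {S : Submodule k M} {x : A ⊗[k] M}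
    (hx : x ∈ range (S.subtype.lTensor A)) : S.mkQ.lTensor A x = 0 := by
  obtain ⟨y, rfl⟩ := hx
  rw [← LinearMap.comp_apply, ← lTensor_comp]
  have : S.mkQ.comp S.subtype = 0 := by ext s; simp
  rw [this]
  simp [lTensor_zero]

lemma mem_range_rT_of_mkQ_zero {S : Submodule k M} {x : M ⊗[k] A}
    (hx : S.mkQ.rTensor A x = 0) : x ∈ range (S.subtype.rTensor A) := by
  have := (Module.Flat.rTensor_exact A (LinearMap.exact_subtype_mkQ S)) x
  rw [mem_range]
  exact this.mp hx

lemma mem_range_lT_of_mkQ_zero {S : Submodule k M} {x : A ⊗[k] M}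
    (hx : S.mkQ.lTensor A x = 0) : x ∈ range (S.subtype.lTensor A) := by
  have := (Module.Flat.lTensor_exact A (LinearMap.exact_subtype_mkQ S)) x
  rw [mem_range]
  exact this.mp hx

/-- range of rTensor of range-subtype equals range of rTensor -/
lemma range_rT_subtype (f : M →ₗ[k] N) :
    range ((range f).subtype.rTensor A) = range (f.rTensor A) := by
  have hf : (range f).subtype ∘ₗ f.rangeRestrict = f :=
    LinearMap.subtype_comp_codRestrict _ _ _
  conv_rhs => rw [← hf, rTensor_comp]
  rw [range_comp, range_eq_top.mpr (LinearMap.rTensor_surjective A f.surjective_rangeRestrict),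
    Submodule.map_top]

lemma range_lT_subtype (f : M →ₗ[k] N) :
    range ((range f).subtype.lTensor A) = range (f.lTensor A) := by
  have hf : (range f).subtype ∘ₗ f.rangeRestrict = f :=
    LinearMap.subtype_comp_codRestrict _ _ _
  conv_rhs => rw [← hf, lTensor_comp]
  rw [range_comp, range_eq_top.mpr (LinearMap.lTensor_surjective A f.surjective_rangeRestrict),
    Submodule.map_top]

/-- Lemma B: pull a subspace condition back through lTensor. -/
lemma pull_lT (f : P →ₗ[k] Q) (S : Submodule k Q) {x : A ⊗[k] P}
    (hx : f.lTensor A x ∈ range (S.subtype.lTensor A)) :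
    x ∈ range ((S.comap f).subtype.lTensor A) := by
  have h0 : (S.mkQ ∘ₗ f).lTensor A x = 0 := by
    rw [lTensor_comp, LinearMap.comp_apply]
    exact lT_mkQ_eq_zero hx
  have := mem_range_lT_ker (A := A) h0
  rwa [show ker (S.mkQ ∘ₗ f) = S.comap f by rw [ker_comp, Submodule.ker_mkQ]] at this

/-- Lemma D: pull a first-factor range condition back through an injective
second-factor map. -/
lemma pull_rT {f : M →ₗ[k] N} {g : P →ₗ[k] Q} (hg : Function.Injective g) {y : N ⊗[k] P}
    (hy : g.lTensor N y ∈ range (f.rTensor Q)) : y ∈ range (f.rTensor P) := by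
  set S := range f
  have h1 : S.mkQ.rTensor Q (g.lTensor N y) = 0 := by
    rw [← range_rT_subtype (A := Q) f] at hy
    exact rT_mkQ_eq_zero hy
  have h2 : g.lTensor (N ⧸ S) (S.mkQ.rTensor P y) = 0 := by
    have : (g.lTensor (N ⧸ S)) ∘ₗ (S.mkQ.rTensor P) = (S.mkQ.rTensor Q) ∘ₗ (g.lTensor N) := by
      rw [lTensor_comp_rTensor, rTensor_comp_lTensor]
    rw [← LinearMap.comp_apply, this, LinearMap.comp_apply, h1]
  have hginj : Function.Injective (g.lTensor (N ⧸ S)) :=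
    Module.Flat.lTensor_preserves_injective_linearMap g hg
  have h3 : S.mkQ.rTensor P y = 0 := hginj (by simpa using h2)
  have := mem_range_rT_of_mkQ_zero h3
  rwa [range_rT_subtype] at this

/-- Lemma C: preimage of a quotient-side tensor subspace. -/
lemma quot_pull (S : Submodule k M) (T : Submodule k P) {x : M ⊗[k] P}
    (hx : S.mkQ.rTensor P x ∈ range (T.subtype.lTensor (M ⧸ S))) :
    x ∈ range (S.subtype.rTensor P) ⊔ range (T.subtype.lTensor M) := by
  obtain ⟨z, hz⟩ := hx
  obtain ⟨w, rfl⟩ := LinearMap.rTensor_surjective T (Submodule.mkQ_surjective S) z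
  set y := T.subtype.lTensor M w with hy
  have hcomm : S.mkQ.rTensor P y = S.mkQ.rTensor P x := by
    rw [hy, ← LinearMap.comp_apply, rTensor_comp_lTensor, ← hz, ← LinearMap.comp_apply,
      lTensor_comp_rTensor]
  have hxy : x - y ∈ range (S.subtype.rTensor P) := by
    apply mem_range_rT_of_mkQ_zero
    rw [map_sub, hcomm, sub_self]
  rw [show x = (x - y) + y by abel]
  have hy2 : y ∈ range (T.subtype.lTensor M) := LinearMap.mem_range.mpr ⟨w, rfl⟩
  exact Submodule.add_mem_sup hxy hy2

/-- Lemma A: the key pullback lemma. -/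
lemma main_pull (S : Submodule k M) (f : P →ₗ[k] Q) (W : Submodule k Q) {x : M ⊗[k] P}
    (hx : f.lTensor M x ∈ range (S.subtype.rTensor Q) ⊔ range (W.subtype.lTensor M)) :
    x ∈ range (S.subtype.rTensor P) ⊔ range ((W.comap f).subtype.lTensor M) := by
  obtain ⟨a, ha, b, hb, hab⟩ := Submodule.mem_sup.mp hx
  have h1 : S.mkQ.rTensor Q (f.lTensor M x) ∈ range (W.subtype.lTensor (M ⧸ S)) := by
    rw [← hab, map_add, rT_mkQ_eq_zero ha, zero_add]
    obtain ⟨w, rfl⟩ := hb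
    refine LinearMap.mem_range.mpr ⟨S.mkQ.rTensor W w, ?_⟩
    rw [← LinearMap.comp_apply, lTensor_comp_rTensor, ← rTensor_comp_lTensor,
      LinearMap.comp_apply]
  have h2 : f.lTensor (M ⧸ S) (S.mkQ.rTensor P x) ∈ range (W.subtype.lTensor (M ⧸ S)) := by
    have : (f.lTensor (M ⧸ S)) ∘ₗ (S.mkQ.rTensor P) = (S.mkQ.rTensor Q) ∘ₗ (f.lTensor M) := by
      rw [lTensor_comp_rTensor, rTensor_comp_lTensor]
    rw [← LinearMap.comp_apply, this]
    exact h1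
  have h3 := pull_lT (A := M ⧸ S) f W h2
  exact quot_pull S (W.comap f) h3


/-- Injectivity of `map f g` for injective `f`, `g`. -/
lemma inj_map {f : M →ₗ[k] N} {g : P →ₗ[k] Q} (hf : Function.Injective f)
    (hg : Function.Injective g) : Function.Injective (TensorProduct.map f g) := by
  rw [← rTensor_comp_lTensor]
  exact (Module.Flat.rTensor_preserves_injective_linearMap f hf).comp
    (Module.Flat.lTensor_preserves_injective_linearMap g hg)

/-- Corestriction of a map through an injective map. -/
noncomputable def corestrict {X Y Z : Type} [AddCommGroup X] [Module k X] [AddCommGroup Y]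
    [Module k Y] [AddCommGroup Z] [Module k Z] (j : X →ₗ[k] Y) (hj : Function.Injective j)
    (f : Z →ₗ[k] Y) (hf : ∀ z, f z ∈ range j) : Z →ₗ[k] X :=
  ((LinearEquiv.ofInjective j hj).symm : range j →ₗ[k] X) ∘ₗ (f.codRestrict (range j) hf)

lemma corestrict_apply {X Y Z : Type} [AddCommGroup X] [Module k X] [AddCommGroup Y]
    [Module k Y] [AddCommGroup Z] [Module k Z] (j : X →ₗ[k] Y) (hj : Function.Injective j)
    (f : Z →ₗ[k] Y) (hf : ∀ z, f z ∈ range j) (z : Z) :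
    j (corestrict j hj f hf z) = f z := by
  have h := congrArg (Subtype.val) <|
    (LinearEquiv.ofInjective j hj).apply_symm_apply (f.codRestrict (range j) hf z)
  rw [LinearEquiv.ofInjective_apply] at h
  exact h

lemma corestrict_comp {X Y Z : Type} [AddCommGroup X] [Module k X] [AddCommGroup Y]
    [Module k Y] [AddCommGroup Z] [Module k Z] (j : X →ₗ[k] Y) (hj : Function.Injective j)
    (f : Z →ₗ[k] Y) (hf : ∀ z, f z ∈ range j) :
    j ∘ₗ corestrict j hj f hf = f :=
  LinearMap.ext (corestrict_apply j hj f hf)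

/-- sup of first-factor tensor subspaces -/
lemma sup_rT (A' B : Submodule k M) {x : M ⊗[k] P}
    (hx : x ∈ range ((A' ⊔ B).subtype.rTensor P)) :
    x ∈ range (A'.subtype.rTensor P) ⊔ range (B.subtype.rTensor P) := by
  obtain ⟨t, rfl⟩ := hx
  induction t using TensorProduct.induction_on with
  | zero => simp
  | tmul a y =>
    obtain ⟨b, hb, c, hc, hbc⟩ := Submodule.mem_sup.mp a.2
    have : ((A' ⊔ B).subtype.rTensor P) (a ⊗ₜ y) = b ⊗ₜ y + c ⊗ₜ y := by
      simp only [rTensor_tmul, Submodule.subtype_apply, ← hbc]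
      rw [← TensorProduct.add_tmul]
    rw [this]
    refine Submodule.add_mem_sup ?_ ?_
    · exact LinearMap.mem_range.mpr ⟨(⟨b, hb⟩ : A') ⊗ₜ y, rfl⟩
    · exact LinearMap.mem_range.mpr ⟨(⟨c, hc⟩ : B) ⊗ₜ y, rfl⟩
  | add u v hu hv =>
    rw [map_add]
    exact Submodule.add_mem _ hu hv

/-- monotonicity of first-factor tensor subspaces -/
lemma mono_rT {A' B : Submodule k M} (h : A' ≤ B) :
    range (A'.subtype.rTensor P) ≤ range (B.subtype.rTensor P) := by
  have : A'.subtype = B.subtype ∘ₗ Submodule.inclusion h := rfl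
  rw [this, rTensor_comp, range_comp]
  exact LinearMap.map_le_range


lemma rT_eq {k : Type} [Field k] {A M N : Type} [AddCommGroup A] [Module k A]
    [AddCommGroup M] [Module k M] [AddCommGroup N] [Module k N] (f : M →ₗ[k] N) :
    f.rTensor A = TensorProduct.map f LinearMap.id := rfl

lemma lT_eq {k : Type} [Field k] {A M N : Type} [AddCommGroup A] [Module k A]
    [AddCommGroup M] [Module k M] [AddCommGroup N] [Module k N] (f : M →ₗ[k] N) :
    f.lTensor A = TensorProduct.map LinearMap.id f := rfl

lemma lid_natural {k : Type} [Field k] {M N : Type} [AddCommGroup M] [Module k M]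
    [AddCommGroup N] [Module k N] (g : M →ₗ[k] N) (z : k ⊗[k] M) :
    g (TensorProduct.lid k M z) = TensorProduct.lid k N (g.lTensor k z) := by
  induction z using TensorProduct.induction_on with
  | zero => simp
  | tmul a m => simp
  | add u v hu hv => simp only [map_add, hu, hv]

lemma range_map_le_rT {k : Type} [Field k] {M N P Q : Type} [AddCommGroup M] [Module k M]
    [AddCommGroup N] [Module k N] [AddCommGroup P] [Module k P] [AddCommGroup Q] [Module k Q]
    (f : M →ₗ[k] N) (g : P →ₗ[k] Q) :
    range (TensorProduct.map f g) ≤ range (f.rTensor Q) := by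
  rw [← rTensor_comp_lTensor, range_comp]
  exact LinearMap.map_le_range

lemma range_map_le_lT {k : Type} [Field k] {M N P Q : Type} [AddCommGroup M] [Module k M]
    [AddCommGroup N] [Module k N] [AddCommGroup P] [Module k P] [AddCommGroup Q] [Module k Q]
    (f : M →ₗ[k] N) (g : P →ₗ[k] Q) :
    range (TensorProduct.map f g) ≤ range (g.lTensor N) := by
  rw [← lTensor_comp_rTensor, range_comp]
  exact LinearMap.map_le_range

lemma range_map_le_map_subtype {k : Type} [Field k] {M N P Q : Type} [AddCommGroup M]
    [Module k M] [AddCommGroup N] [Module k N] [AddCommGroup P] [Module k P] [AddCommGroup Q]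
    [Module k Q] {A' : Submodule k N} {B : Submodule k Q} {f : M →ₗ[k] N} {g : P →ₗ[k] Q}
    (hf : ∀ x, f x ∈ A') (hg : ∀ x, g x ∈ B) :
    range (TensorProduct.map f g) ≤ range (TensorProduct.map A'.subtype B.subtype) := by
  have : TensorProduct.map f g = TensorProduct.map A'.subtype B.subtype ∘ₗ
      TensorProduct.map (f.codRestrict A' hf) (g.codRestrict B hg) := by
    rw [← TensorProduct.map_comp, LinearMap.subtype_comp_codRestrict,
      LinearMap.subtype_comp_codRestrict]
  rw [this, range_comp]
  exact LinearMap.map_le_range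

section Coalg

variable {k : Type} [Field k]
variable {C : Type} [AddCommGroup C] [Module k C] [Coalgebra k C]

/-- The counit retraction of the cofree coaction. -/
lemma retract_cofree (V : Type) [AddCommGroup V] [Module k V] :
    TensorProduct.map (LinearMap.id (M := C))
        ((TensorProduct.lid k V).toLinearMap ∘ₗ
          (CoalgebraStruct.counit (R := k) (A := C)).rTensor V) ∘ₗ
      cofreeCoaction k C V = LinearMap.id := by
  set ε := CoalgebraStruct.counit (R := k) (A := C)
  set Δ := CoalgebraStruct.comul (R := k) (A := C)
  have h1 : TensorProduct.map (LinearMap.id (M := C))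
      ((TensorProduct.lid k V).toLinearMap ∘ₗ ε.rTensor V) =
      TensorProduct.map LinearMap.id (TensorProduct.lid k V).toLinearMap ∘ₗ
        TensorProduct.map LinearMap.id (TensorProduct.map ε LinearMap.id) := by
    rw [← TensorProduct.map_comp, LinearMap.id_comp, rT_eq]
  have h2 : TensorProduct.map (LinearMap.id (M := C)) (TensorProduct.map ε LinearMap.id) ∘ₗ
      (TensorProduct.assoc k C C V).toLinearMap =
      (TensorProduct.assoc k C k V).toLinearMap ∘ₗ
        TensorProduct.map (TensorProduct.map LinearMap.id ε) LinearMap.id :=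
    TensorProduct.map_map_comp_assoc_eq _ _ _
  have h3 : TensorProduct.map (TensorProduct.map (LinearMap.id (M := C)) ε) LinearMap.id ∘ₗ
      Δ.rTensor V = ((ε.lTensor C ∘ₗ Δ).rTensor V) := by
    rw [rT_eq Δ, ← TensorProduct.map_comp, LinearMap.id_comp, lT_eq, rT_eq]
  apply TensorProduct.ext'
  intro c v
  have hmk : Coalgebra.counit.lTensor C (Δ c) = c ⊗ₜ[k] (1 : k) := by
    simp [ε, Δ]
  simp only [LinearMap.comp_apply, LinearMap.id_apply, cofreeCoaction, h1,
    LinearEquiv.coe_coe]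
  rw [show (Δ.rTensor V) (c ⊗ₜ[k] v) = Δ c ⊗ₜ[k] v from rfl,
    TensorProduct.map_map_assoc,
    show (TensorProduct.map (TensorProduct.map LinearMap.id ε) LinearMap.id) (Δ c ⊗ₜ[k] v)
      = (ε.lTensor C (Δ c)) ⊗ₜ[k] v from rfl, hmk]
  simp [TensorProduct.assoc_tmul]

end Coalg

section Comod

variable {k : Type} [Field k]
variable {C : Type} [AddCommGroup C] [Module k C] [Coalgebra k C]
variable {E : Type} [AddCommGroup E] [Module k E] [Coalgebra k E]
variable {L : Type} [AddCommGroup L] [Module k L]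

/-- The restricted coaction on a subcomodule. -/
noncomputable def subCoaction (ρ : L →ₗ[k] C ⊗[k] L) (S : Submodule k L)
    (hS : ∀ x : S, ρ (x : L) ∈ range (S.subtype.lTensor C)) : S →ₗ[k] C ⊗[k] S :=
  corestrict (S.subtype.lTensor C)
    (Module.Flat.lTensor_preserves_injective_linearMap _ S.injective_subtype)
    (ρ ∘ₗ S.subtype) hS

lemma subCoaction_apply (ρ : L →ₗ[k] C ⊗[k] L) (S : Submodule k L)
    (hS : ∀ x : S, ρ (x : L) ∈ range (S.subtype.lTensor C)) (x : S) :
    S.subtype.lTensor C (subCoaction ρ S hS x) = ρ (x : L) :=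
  corestrict_apply _ _ _ _ x

lemma subCoaction_coassoc (ρ : L →ₗ[k] C ⊗[k] L) (hL : IsComod k C ρ) (S : Submodule k L)
    (hS : ∀ x : S, ρ (x : L) ∈ range (S.subtype.lTensor C)) (x : S) :
    (TensorProduct.assoc k C C S)
        ((CoalgebraStruct.comul (R := k) (A := C)).rTensor S (subCoaction ρ S hS x)) =
      (subCoaction ρ S hS).lTensor C (subCoaction ρ S hS x) := by
  set Δ := CoalgebraStruct.comul (R := k) (A := C) with hΔ
  have hJ : Function.Injective ((S.subtype.lTensor C).lTensor C) :=
    Module.Flat.lTensor_preserves_injective_linearMap _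
      (Module.Flat.lTensor_preserves_injective_linearMap _ S.injective_subtype)
  apply hJ
  have lhs : (S.subtype.lTensor C).lTensor C
      ((TensorProduct.assoc k C C S) ((Δ.rTensor S) (subCoaction ρ S hS x))) =
      (TensorProduct.assoc k C C L) ((Δ.rTensor L) (ρ (x : L))) := by
    rw [lT_eq (S.subtype.lTensor C), lT_eq S.subtype, TensorProduct.map_map_assoc]
    congr 1
    rw [← subCoaction_apply ρ S hS x, lT_eq S.subtype,
      rT_eq (A := ↥S) Δ, rT_eq (A := L) Δ, ← LinearMap.comp_apply,
      ← TensorProduct.map_comp]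
    rw [← LinearMap.comp_apply (TensorProduct.map Δ LinearMap.id), ← TensorProduct.map_comp]
    simp
  have rhs : (S.subtype.lTensor C).lTensor C
      (((subCoaction ρ S hS).lTensor C) (subCoaction ρ S hS x)) =
      (ρ.lTensor C) (ρ (x : L)) := by
    have hc : (S.subtype.lTensor C) ∘ₗ subCoaction ρ S hS = ρ ∘ₗ S.subtype :=
      corestrict_comp _ _ _ _
    rw [← LinearMap.comp_apply, ← lTensor_comp, hc, lTensor_comp, LinearMap.comp_apply,
      subCoaction_apply ρ S hS x]
  rw [lhs, rhs, hL.coassoc]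

variable (ι : E →ₗc[k] C)

/-- The coaction of `L` maps `_E L` into `C ⊗ (_E L)`. -/
lemma maxSub_mem_CN (ρ : L →ₗ[k] C ⊗[k] L) (hL : IsComod k C ρ)
    (n : ↥(maxSubcomodule k C ι ρ)) :
    ρ (n : L) ∈ range ((maxSubcomodule k C ι ρ).subtype.lTensor C) := by
  set ι' := ι.toLinearMap
  set S : Submodule k (C ⊗[k] L) := range (ι'.rTensor L)
  have key : ρ.lTensor C (ρ (n : L)) ∈ range (S.subtype.lTensor C) := by
    rw [← hL.coassoc]
    obtain ⟨z, hz⟩ : ρ (n : L) ∈ range (ι'.rTensor L) := n.2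
    rw [← hz]
    have e1 : (CoalgebraStruct.comul (R := k) (A := C)).rTensor L ((ι'.rTensor L) z) =
        ((TensorProduct.map ι' ι').rTensor L) ((CoalgebraStruct.comul (R := k) (A := E)).rTensor L z) := by
      rw [← LinearMap.comp_apply, ← rTensor_comp, ← LinearMap.comp_apply, ← rTensor_comp]
      congr 2
      exact (CoalgHom.map_comp_comul ι).symm
    rw [e1, rT_eq (TensorProduct.map ι' ι'), ← TensorProduct.map_map_assoc]
    have hR : S = range (ι'.rTensor L) := rfl
    rw [hR, range_lT_subtype (ι'.rTensor L), rT_eq ι']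
    exact range_map_le_lT _ _ (LinearMap.mem_range_self _ _)
  have := pull_lT (A := C) ρ S key
  exact this

lemma maxSub_mem_j' (ρ : L →ₗ[k] C ⊗[k] L) (hL : IsComod k C ρ)
    (hι : Function.Injective ι.toLinearMap) (n : ↥(maxSubcomodule k C ι ρ)) :
    ρ (n : L) ∈ range (TensorProduct.map ι.toLinearMap (maxSubcomodule k C ι ρ).subtype) := by
  obtain ⟨y, hy⟩ := maxSub_mem_CN ι ρ hL n
  have h1 : ρ (n : L) ∈ range (ι.toLinearMap.rTensor L) := n.2
  rw [← hy] at h1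
  have h2 : y ∈ range (ι.toLinearMap.rTensor ↥(maxSubcomodule k C ι ρ)) :=
    pull_rT (maxSubcomodule k C ι ρ).injective_subtype h1
  obtain ⟨w, hw⟩ := h2
  refine LinearMap.mem_range.mpr ⟨w, ?_⟩
  rw [← hy, ← hw, ← LinearMap.comp_apply, lTensor_comp_rTensor]

/-- The canonical `E`-coaction on `_E L`. -/
noncomputable def canonCoaction (ρ : L →ₗ[k] C ⊗[k] L) (hL : IsComod k C ρ)
    (hι : Function.Injective ι.toLinearMap) :
    ↥(maxSubcomodule k C ι ρ) →ₗ[k] E ⊗[k] ↥(maxSubcomodule k C ι ρ) :=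
  corestrict (TensorProduct.map ι.toLinearMap (maxSubcomodule k C ι ρ).subtype)
    (inj_map hι (maxSubcomodule k C ι ρ).injective_subtype)
    (ρ ∘ₗ (maxSubcomodule k C ι ρ).subtype) (fun n => maxSub_mem_j' ι ρ hL hι n)

lemma canonCoaction_compat (ρ : L →ₗ[k] C ⊗[k] L) (hL : IsComod k C ρ)
    (hι : Function.Injective ι.toLinearMap) :
    CompatibleECoaction k C E ι ρ (maxSubcomodule k C ι ρ) (canonCoaction ι ρ hL hι) :=
  fun n => corestrict_apply _ _ _ _ n

lemma canonCoaction_isComod (ρ : L →ₗ[k] C ⊗[k] L) (hL : IsComod k C ρ)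
    (hι : Function.Injective ι.toLinearMap) :
    IsComod k E (canonCoaction ι ρ hL hι) := by
  set N := maxSubcomodule k C ι ρ with hNdef
  set ρ' := canonCoaction ι ρ hL hι with hρ'def
  have hcomp : (TensorProduct.map ι.toLinearMap N.subtype) ∘ₗ ρ' = ρ ∘ₗ N.subtype :=
    corestrict_comp _ _ _ _
  have hcompat : ∀ n : ↥N, (TensorProduct.map ι.toLinearMap N.subtype) (ρ' n) = ρ (n : L) :=
    fun n => LinearMap.congr_fun hcomp n
  constructor
  · intro n
    have hJ : Function.Injective (TensorProduct.map ι.toLinearMap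
        (TensorProduct.map ι.toLinearMap N.subtype)) :=
      inj_map hι (inj_map hι N.injective_subtype)
    apply hJ
    have lhs : (TensorProduct.map ι.toLinearMap (TensorProduct.map ι.toLinearMap N.subtype))
        ((TensorProduct.assoc k E E ↥N)
          ((CoalgebraStruct.comul (R := k) (A := E)).rTensor ↥N (ρ' n))) =
        (TensorProduct.assoc k C C L)
          ((CoalgebraStruct.comul (R := k) (A := C)).rTensor L (ρ (n : L))) := by
      rw [TensorProduct.map_map_assoc]
      congr 1
      rw [← hcompat n, rT_eq (A := ↥N) (CoalgebraStruct.comul (R := k) (A := E)),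
        rT_eq (A := L) (CoalgebraStruct.comul (R := k) (A := C)), ← LinearMap.comp_apply,
        ← TensorProduct.map_comp, ι.map_comp_comul]
      rw [← LinearMap.comp_apply
        (TensorProduct.map (CoalgebraStruct.comul (R := k) (A := C)) LinearMap.id),
        ← TensorProduct.map_comp]
      simp
    have rhs : (TensorProduct.map ι.toLinearMap (TensorProduct.map ι.toLinearMap N.subtype))
        ((ρ'.lTensor E) (ρ' n)) = (ρ.lTensor C) (ρ (n : L)) := by
      rw [← hcompat n, lT_eq ρ', ← LinearMap.comp_apply, ← TensorProduct.map_comp, hcomp]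
      rw [lT_eq ρ, ← LinearMap.comp_apply (TensorProduct.map LinearMap.id ρ),
        ← TensorProduct.map_comp]
      simp
    rw [lhs, rhs, hL.coassoc]
  · intro n
    apply N.injective_subtype
    rw [lid_natural N.subtype]
    rw [rT_eq (CoalgebraStruct.counit (R := k) (A := E)), lT_eq N.subtype,
      ← LinearMap.comp_apply, ← TensorProduct.map_comp, ← ι.counit_comp]
    simp only [LinearMap.id_comp, LinearMap.comp_id]
    rw [show TensorProduct.map ((CoalgebraStruct.counit (R := k) (A := C)) ∘ₗ ι.toLinearMap)
        N.subtype = TensorProduct.map (CoalgebraStruct.counit (R := k) (A := C)) LinearMap.id ∘ₗ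
        TensorProduct.map ι.toLinearMap N.subtype from by
      rw [← TensorProduct.map_comp]; simp]
    rw [LinearMap.comp_apply, hcompat n, ← rT_eq (A := L)]
    simpa using hL.counit (n : L)

lemma finCogen_forward (ρ : L →ₗ[k] C ⊗[k] L) (hL : IsComod k C ρ)
    (hι : Function.Injective ι.toLinearMap)
    (ρ' : ↥(maxSubcomodule k C ι ρ) →ₗ[k] E ⊗[k] ↥(maxSubcomodule k C ι ρ))
    (hcompat : CompatibleECoaction k C E ι ρ (maxSubcomodule k C ι ρ) ρ')
    (hFC : FinCogen k C ρ) : FinCogen k E ρ' := by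
  obtain ⟨V, iV1, iV2, hV, f, hfinj, hfhom⟩ := hFC
  have hgoal : ∀ n : ↥(maxSubcomodule k C ι ρ),
      (f ∘ₗ (maxSubcomodule k C ι ρ).subtype) n ∈ range (ι.toLinearMap.rTensor V) := by
    intro n
    simp only [LinearMap.comp_apply, Submodule.subtype_apply]
    have hx : cofreeCoaction k C V (f (n : L)) = (f.lTensor C) (ρ (n : L)) :=
      (LinearMap.congr_fun hfhom (n : L)).symm
    obtain ⟨z, hz⟩ : ρ (n : L) ∈ range (ι.toLinearMap.rTensor L) := n.2
    have h1 : cofreeCoaction k C V (f (n : L)) ∈ range (ι.toLinearMap.rTensor (C ⊗[k] V)) := by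
      rw [hx, ← hz, ← LinearMap.comp_apply, lTensor_comp_rTensor, ← rTensor_comp_lTensor,
        LinearMap.comp_apply]
      exact LinearMap.mem_range_self _ _
    obtain ⟨z', hz'⟩ := h1
    have h2 : f (n : L) = (TensorProduct.map (LinearMap.id (M := C))
        ((TensorProduct.lid k V).toLinearMap ∘ₗ
          (CoalgebraStruct.counit (R := k) (A := C)).rTensor V))
        (cofreeCoaction k C V (f (n : L))) := by
      have := LinearMap.congr_fun (retract_cofree (k := k) (C := C) V) (f (n : L))
      simp only [LinearMap.comp_apply, LinearMap.id_apply] at this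
      exact this.symm
    rw [h2, ← hz', rT_eq ι.toLinearMap, rT_eq (A := C ⊗[k] V) ι.toLinearMap,
      ← LinearMap.comp_apply, ← TensorProduct.map_comp]
    simp only [LinearMap.id_comp, LinearMap.comp_id]
    rw [show TensorProduct.map ι.toLinearMap ((TensorProduct.lid k V).toLinearMap ∘ₗ
        (CoalgebraStruct.counit (R := k) (A := C)).rTensor V) =
        TensorProduct.map ι.toLinearMap LinearMap.id ∘ₗ TensorProduct.map LinearMap.id
        ((TensorProduct.lid k V).toLinearMap ∘ₗ
          (CoalgebraStruct.counit (R := k) (A := C)).rTensor V) from by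
      rw [← TensorProduct.map_comp]; simp]
    rw [LinearMap.comp_apply, ← rT_eq ι.toLinearMap]
    exact LinearMap.mem_range_self _ _
  have hjinj : Function.Injective (ι.toLinearMap.rTensor V) :=
    Module.Flat.rTensor_preserves_injective_linearMap ι.toLinearMap hι
  set g := corestrict (ι.toLinearMap.rTensor V) hjinj (f ∘ₗ (maxSubcomodule k C ι ρ).subtype) hgoal with hgdef
  have hgc : (ι.toLinearMap.rTensor V) ∘ₗ g = f ∘ₗ (maxSubcomodule k C ι ρ).subtype := corestrict_comp _ _ _ _
  have hgc' : ∀ n : ↥(maxSubcomodule k C ι ρ), (ι.toLinearMap.rTensor V) (g n) = f (n : L) := fun n => LinearMap.congr_fun hgc n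
  refine ⟨V, iV1, iV2, hV, g, ?_, ?_⟩
  · intro a b hab
    have : f (a : L) = f (b : L) := by rw [← hgc' a, ← hgc' b, hab]
    exact Subtype.ext (hfinj this)
  · apply LinearMap.ext
    intro n
    have hJ2 : Function.Injective (TensorProduct.map ι.toLinearMap (ι.toLinearMap.rTensor V)) :=
      inj_map hι hjinj
    apply hJ2
    have lhs : (TensorProduct.map ι.toLinearMap (ι.toLinearMap.rTensor V)) (((g.lTensor E) ∘ₗ ρ') n) =
        cofreeCoaction k C V (f (n : L)) := by
      rw [LinearMap.comp_apply, lT_eq g, ← LinearMap.comp_apply, ← TensorProduct.map_comp,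
        hgc]
      rw [show TensorProduct.map (ι.toLinearMap ∘ₗ LinearMap.id) (f ∘ₗ (maxSubcomodule k C ι ρ).subtype) =
          TensorProduct.map LinearMap.id f ∘ₗ TensorProduct.map ι.toLinearMap (maxSubcomodule k C ι ρ).subtype from by
        rw [← TensorProduct.map_comp]; simp]
      rw [LinearMap.comp_apply, hcompat n, ← lT_eq f]
      exact LinearMap.congr_fun hfhom (n : L)
    have rhs : (TensorProduct.map ι.toLinearMap (ι.toLinearMap.rTensor V)) ((cofreeCoaction k E V ∘ₗ g) n) =
        cofreeCoaction k C V (f (n : L)) := by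
      rw [LinearMap.comp_apply, cofreeCoaction, LinearMap.comp_apply, LinearEquiv.coe_coe,
        rT_eq (A := V) ι.toLinearMap, TensorProduct.map_map_assoc]
      rw [show (TensorProduct.map (TensorProduct.map ι.toLinearMap ι.toLinearMap) LinearMap.id)
          (((CoalgebraStruct.comul (R := k) (A := E)).rTensor V) (g n)) =
          ((TensorProduct.map ι.toLinearMap ι.toLinearMap ∘ₗ (CoalgebraStruct.comul (R := k) (A := E))).rTensor V)
            (g n) from by
        rw [rT_eq (CoalgebraStruct.comul (R := k) (A := E)), ← LinearMap.comp_apply,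
          ← TensorProduct.map_comp, rT_eq]
        simp]
      rw [ι.map_comp_comul, rTensor_comp, LinearMap.comp_apply, hgc' n]
      rfl
    rw [lhs, rhs]

end Comod



/-- Monotonicity of the conilpotency filtration. -/
lemma conilChain_mono_step {k : Type} [Field k] {C : Type} [AddCommGroup C] [Module k C]
    [Coalgebra k C] {E : Type} [AddCommGroup E] [Module k E] [Coalgebra k E]
    (ι : E →ₗc[k] C) (n : ℕ) :
    conilChain k C (range ι.toLinearMap) n ≤ conilChain k C (range ι.toLinearMap) (n + 1) := by
  induction n with
  | zero =>
    intro c hc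
    obtain ⟨e, rfl⟩ := hc
    have h1 : CoalgebraStruct.comul (R := k) (A := C) (ι.toLinearMap e) =
        (TensorProduct.map ι.toLinearMap ι.toLinearMap)
          (CoalgebraStruct.comul (R := k) (A := E) e) :=
      (LinearMap.congr_fun (ι.map_comp_comul) e).symm
    have h2 : CoalgebraStruct.comul (R := k) (A := C) (ι.toLinearMap e) ∈
        tensorSub k C (range ι.toLinearMap) ⊤ := by
      rw [h1]
      exact range_map_le_map_subtype (fun x => LinearMap.mem_range_self _ x)
        (fun x => Submodule.mem_top) (LinearMap.mem_range_self _ _)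
    exact Submodule.mem_comap.mpr (Submodule.mem_sup_left h2)
  | succ m ih =>
    intro c hc
    have hc' : CoalgebraStruct.comul (R := k) (A := C) c ∈
        tensorSub k C (range ι.toLinearMap) ⊤ ⊔
          tensorSub k C ⊤ (conilChain k C (range ι.toLinearMap) m) := hc
    refine Submodule.mem_comap.mpr (sup_le_sup_left
      (range_map_le_map_subtype (fun x => Submodule.mem_top) (fun x => ih x.2)) _ hc')

lemma conilChain_mono {k : Type} [Field k] {C : Type} [AddCommGroup C] [Module k C]
    [Coalgebra k C] {E : Type} [AddCommGroup E] [Module k E] [Coalgebra k E]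
    (ι : E →ₗc[k] C) : Monotone (conilChain k C (range ι.toLinearMap)) :=
  monotone_nat_of_le_succ (conilChain_mono_step ι)

section Core2

variable {k : Type} [Field k]
variable {C : Type} [AddCommGroup C] [Module k C] [Coalgebra k C]
variable {E : Type} [AddCommGroup E] [Module k E] [Coalgebra k E]
variable {L : Type} [AddCommGroup L] [Module k L]

/-- The key conilpotency argument: a subcomodule meeting `_E L` trivially is trivial. -/
lemma sub_eq_bot_of_conil (ι : E →ₗc[k] C)
    (hconil : ConilpotentQuotient k C (range ι.toLinearMap))
    (ρ : L →ₗ[k] C ⊗[k] L) (hL : IsComod k C ρ) (S : Submodule k L)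
    (hS : ∀ x : S, ρ (x : L) ∈ range (S.subtype.lTensor C))
    (hmeet : ∀ x : L, x ∈ S → x ∈ maxSubcomodule k C ι ρ → x = 0) :
    S = ⊥ := by
  set Er : Submodule k C := range ι.toLinearMap with hErdef
  set σ := subCoaction ρ S hS with hσdef
  set F : ℕ → Submodule k C := conilChain k C Er with hFdef
  set Kn : ℕ → Submodule k ↥S :=
    fun n => Submodule.comap σ (range ((F n).subtype.rTensor ↥S)) with hKndef
  -- step 0
  have hK0 : Kn 0 = ⊥ := by
    rw [Submodule.eq_bot_iff]
    intro x hx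
    have hx1 : σ x ∈ range ((F 0).subtype.rTensor ↥S) := hx
    rw [show F 0 = Er from rfl, hErdef, range_rT_subtype ι.toLinearMap] at hx1
    obtain ⟨z, hz⟩ := hx1
    have hx2 : ρ (x : L) ∈ range (ι.toLinearMap.rTensor L) := by
      rw [← subCoaction_apply ρ S hS x, ← hσdef, ← hz, ← LinearMap.comp_apply,
        lTensor_comp_rTensor, ← rTensor_comp_lTensor, LinearMap.comp_apply]
      exact LinearMap.mem_range_self _ _
    have := hmeet (x : L) x.2 (Submodule.mem_comap.mpr hx2)
    exact Subtype.ext this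
  -- inductive step
  have hKsucc : ∀ n, Kn n = ⊥ → Kn (n + 1) = ⊥ := by
    intro n hn
    rw [Submodule.eq_bot_iff]
    intro x hx
    have hx1 : σ x ∈ range ((F (n + 1)).subtype.rTensor ↥S) := hx
    obtain ⟨z, hz⟩ := hx1
    set G1 : Submodule k (C ⊗[k] C) := tensorSub k C Er ⊤ with hG1def
    set G2 : Submodule k (C ⊗[k] C) := tensorSub k C ⊤ (F n) with hG2def
    -- comultiplication of the filtration
    have hsub : ∀ t : ↥(F (n + 1)), CoalgebraStruct.comul (R := k) (A := C) (t : C) ∈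
        G1 ⊔ G2 := fun t => t.2
    have hfac : (CoalgebraStruct.comul (R := k) (A := C)).rTensor ↥S (σ x) ∈
        range ((G1 ⊔ G2).subtype.rTensor ↥S) := by
      rw [← hz, ← LinearMap.comp_apply, ← rTensor_comp]
      rw [show CoalgebraStruct.comul (R := k) (A := C) ∘ₗ (F (n + 1)).subtype =
          (G1 ⊔ G2).subtype ∘ₗ LinearMap.codRestrict (G1 ⊔ G2)
            (CoalgebraStruct.comul (R := k) (A := C) ∘ₗ (F (n + 1)).subtype)
            (fun t => hsub t) from
        (LinearMap.subtype_comp_codRestrict _ _ _).symm]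
      rw [rTensor_comp, LinearMap.comp_apply]
      exact LinearMap.mem_range_self _ _
    have hsup := sup_rT G1 G2 hfac
    obtain ⟨a, ha, b, hb, hab⟩ := Submodule.mem_sup.mp hsup
    -- push through the associator
    have hmain : (σ.lTensor C) (σ x) ∈
        range (Er.subtype.rTensor (C ⊗[k] ↥S)) ⊔
          range ((range ((F n).subtype.rTensor ↥S)).subtype.lTensor C) := by
      rw [← subCoaction_coassoc ρ hL S hS x, ← hσdef, ← hab, map_add]
      refine Submodule.add_mem_sup ?_ ?_
      · rw [hG1def] at ha
        rw [show tensorSub k C Er ⊤ = range (TensorProduct.map Er.subtype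
          (⊤ : Submodule k C).subtype) from rfl, range_rT_subtype] at ha
        obtain ⟨u, rfl⟩ := ha
        rw [rT_eq (TensorProduct.map Er.subtype (⊤ : Submodule k C).subtype),
          ← TensorProduct.map_map_assoc]
        exact range_map_le_rT _ _ (LinearMap.mem_range_self _ _)
      · rw [hG2def] at hb
        rw [show tensorSub k C ⊤ (F n) = range (TensorProduct.map
          (⊤ : Submodule k C).subtype (F n).subtype) from rfl, range_rT_subtype] at hb
        obtain ⟨u, rfl⟩ := hb
        rw [rT_eq (TensorProduct.map (⊤ : Submodule k C).subtype (F n).subtype),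
          ← TensorProduct.map_map_assoc]
        rw [range_lT_subtype ((F n).subtype.rTensor ↥S), rT_eq (A := ↥S) (F n).subtype]
        exact range_map_le_lT _ _ (LinearMap.mem_range_self _ _)
    have hpull := main_pull Er σ (range ((F n).subtype.rTensor ↥S)) hmain
    have hKbot : Submodule.comap σ (range ((F n).subtype.rTensor ↥S)) = ⊥ := hn
    rw [hKbot] at hpull
    have hzero : range ((⊥ : Submodule k ↥S).subtype.lTensor C) = ⊥ := by
      have hb0 : ((⊥ : Submodule k ↥S).subtype) = 0 := by
        ext v
        simpa using (Submodule.mem_bot k).mp v.2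
      rw [hb0, lTensor_zero, range_zero]
    rw [hzero, sup_bot_eq] at hpull
    exact (Submodule.eq_bot_iff _).mp hK0 x hpull
  have hKall : ∀ n, Kn n = ⊥ := by
    intro n
    induction n with
    | zero => exact hK0
    | succ m ih => exact hKsucc m ih
  -- exhaustiveness
  have hexh : ∀ t : C ⊗[k] ↥S, ∃ n, t ∈ range ((F n).subtype.rTensor ↥S) := by
    intro t
    induction t using TensorProduct.induction_on with
    | zero => exact ⟨0, Submodule.zero_mem _⟩
    | tmul c y =>
      obtain ⟨n, hn⟩ := hconil c
      exact ⟨n, LinearMap.mem_range.mpr ⟨(⟨c, hn⟩ : ↥(F n)) ⊗ₜ y, rfl⟩⟩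
    | add u v hu hv =>
      obtain ⟨nu, hnu⟩ := hu
      obtain ⟨nv, hnv⟩ := hv
      refine ⟨max nu nv, Submodule.add_mem _ ?_ ?_⟩
      · exact mono_rT (conilChain_mono ι (le_max_left nu nv)) hnu
      · exact mono_rT (conilChain_mono ι (le_max_right nu nv)) hnv
  rw [Submodule.eq_bot_iff]
  intro x hx
  obtain ⟨n, hn⟩ := hexh (σ ⟨x, hx⟩)
  have : (⟨x, hx⟩ : ↥S) ∈ Kn n := hn
  rw [hKall n] at this
  simpa using congrArg Subtype.val this

lemma finCogen_backward (ι : E →ₗc[k] C) (hι : Function.Injective ι.toLinearMap)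
    (hconil : ConilpotentQuotient k C (range ι.toLinearMap))
    (ρ : L →ₗ[k] C ⊗[k] L) (hL : IsComod k C ρ)
    (ρ' : ↥(maxSubcomodule k C ι ρ) →ₗ[k] E ⊗[k] ↥(maxSubcomodule k C ι ρ))
    (hcompat : CompatibleECoaction k C E ι ρ (maxSubcomodule k C ι ρ) ρ')
    (hFC : FinCogen k E ρ') : FinCogen k C ρ := by
  obtain ⟨V, iV1, iV2, hV, g, hginj, hghom⟩ := hFC
  obtain ⟨w, hw⟩ := LinearMap.exists_extend ((TensorProduct.lid k V).toLinearMap ∘ₗ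
    (CoalgebraStruct.counit (R := k) (A := E)).rTensor V ∘ₗ g)
  -- the candidate comodule morphism
  have hfhom : IsComodHom k C ρ (cofreeCoaction k C V) ((w.lTensor C) ∘ₗ ρ) := by
    apply LinearMap.ext
    intro m
    have lhs : (((w.lTensor C) ∘ₗ ρ).lTensor C) (ρ m) =
        (TensorProduct.map LinearMap.id (TensorProduct.map LinearMap.id w))
          ((ρ.lTensor C) (ρ m)) := by
      conv_rhs => rw [lT_eq ρ, ← LinearMap.comp_apply, ← TensorProduct.map_comp]
      rw [lT_eq ((w.lTensor C) ∘ₗ ρ), lT_eq w]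
      simp
    have rhs : cofreeCoaction k C V (((w.lTensor C) ∘ₗ ρ) m) =
        (TensorProduct.map LinearMap.id (TensorProduct.map LinearMap.id w))
          ((ρ.lTensor C) (ρ m)) := by
      rw [← hL.coassoc m, cofreeCoaction]
      simp only [LinearMap.comp_apply, LinearEquiv.coe_coe]
      rw [lT_eq w, rT_eq (A := V) (CoalgebraStruct.comul (R := k) (A := C)),
        ← LinearMap.comp_apply
          (TensorProduct.map (CoalgebraStruct.comul (R := k) (A := C)) LinearMap.id),
        ← TensorProduct.map_comp]
      rw [show TensorProduct.map ((CoalgebraStruct.comul (R := k) (A := C)) ∘ₗ LinearMap.id)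
          (LinearMap.id ∘ₗ w) = TensorProduct.map (TensorProduct.map LinearMap.id LinearMap.id)
            w ∘ₗ TensorProduct.map (CoalgebraStruct.comul (R := k) (A := C)) LinearMap.id from by
        rw [← TensorProduct.map_comp]; simp [TensorProduct.map_id]]
      rw [LinearMap.comp_apply, ← TensorProduct.map_map_assoc, ← rT_eq]
    rw [LinearMap.comp_apply, LinearMap.comp_apply, lhs, rhs]
  -- restriction to the maximal subcomodule
  have hresN : ∀ n : ↥(maxSubcomodule k C ι ρ),
      (w.lTensor C) (ρ (n : L)) = (ι.toLinearMap.rTensor V) (g n) := by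
    intro n
    rw [← hcompat n, lT_eq w, ← LinearMap.comp_apply, ← TensorProduct.map_comp, hw]
    rw [show TensorProduct.map (LinearMap.id ∘ₗ ι.toLinearMap)
        ((TensorProduct.lid k V).toLinearMap ∘ₗ
          (CoalgebraStruct.counit (R := k) (A := E)).rTensor V ∘ₗ g) =
        TensorProduct.map ι.toLinearMap ((TensorProduct.lid k V).toLinearMap ∘ₗ
          (CoalgebraStruct.counit (R := k) (A := E)).rTensor V) ∘ₗ
          TensorProduct.map LinearMap.id g from by
      rw [← TensorProduct.map_comp]; simp [LinearMap.comp_assoc]]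
    rw [LinearMap.comp_apply, ← lT_eq g]
    have hg1 : (g.lTensor E) (ρ' n) = cofreeCoaction k E V (g n) :=
      LinearMap.congr_fun hghom n
    rw [hg1]
    rw [show TensorProduct.map ι.toLinearMap ((TensorProduct.lid k V).toLinearMap ∘ₗ
        (CoalgebraStruct.counit (R := k) (A := E)).rTensor V) =
        TensorProduct.map ι.toLinearMap LinearMap.id ∘ₗ
        TensorProduct.map LinearMap.id ((TensorProduct.lid k V).toLinearMap ∘ₗ
          (CoalgebraStruct.counit (R := k) (A := E)).rTensor V) from by
      rw [← TensorProduct.map_comp]; simp]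
    have hr := LinearMap.congr_fun (retract_cofree (k := k) (C := E) V) (g n)
    simp only [LinearMap.comp_apply, LinearMap.id_apply] at hr
    rw [LinearMap.comp_apply, hr, ← rT_eq ι.toLinearMap]
  -- injectivity via the conilpotency argument
  have hker : ker ((w.lTensor C) ∘ₗ ρ) = ⊥ := by
    apply sub_eq_bot_of_conil ι hconil ρ hL
    · intro x
      have hx0 : (w.lTensor C) (ρ (x : L)) = 0 := by
        have hx2 := x.2
        rwa [LinearMap.mem_ker, LinearMap.comp_apply] at hx2
      have h0 : (((w.lTensor C) ∘ₗ ρ).lTensor C) (ρ (x : L)) = 0 := by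
        have hcf := LinearMap.congr_fun hfhom (x : L)
        simp only [LinearMap.comp_apply] at hcf
        rw [hcf, hx0, map_zero]
      exact mem_range_lT_ker h0
    · intro x hxK hxN
      have h1 : (ι.toLinearMap.rTensor V) (g ⟨x, hxN⟩) = 0 := by
        rw [← hresN ⟨x, hxN⟩]
        rwa [LinearMap.mem_ker, LinearMap.comp_apply] at hxK
      have h2 : g ⟨x, hxN⟩ = 0 :=
        (Module.Flat.rTensor_preserves_injective_linearMap ι.toLinearMap hι)
          (by simpa using h1)
      have h3 : (⟨x, hxN⟩ : ↥(maxSubcomodule k C ι ρ)) = 0 := by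
        apply hginj
        rw [h2, map_zero]
      simpa using congrArg Subtype.val h3
  exact ⟨V, iV1, iV2, hV, (w.lTensor C) ∘ₗ ρ, LinearMap.ker_eq_bot.mp hker, hfhom⟩

end Core2


end PAux

/-- Lemma 1.2(d): let `E ⊆ C` be a subcoalgebra (given by an injective morphism of
coalgebras `ι : E → C`) such that the quotient coalgebra without counit `C/E` is
conilpotent.  Then a left `C`-comodule `L` is finitely cogenerated if and only if the
left `E`-comodule `_E L` (with its canonical `E`-coaction, i.e. the unique one
compatible with the coaction of `L`) is finitely cogenerated. -/
theorem finCogen_iff_maxSubcomodule_finCogen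
    (k : Type) [Field k]
    (C : Type) [AddCommGroup C] [Module k C] [Coalgebra k C]
    (E : Type) [AddCommGroup E] [Module k E] [Coalgebra k E]
    (ι : E →ₗc[k] C) (hι : Function.Injective ι)
    (hconil : ConilpotentQuotient k C (LinearMap.range ι.toLinearMap))
    (L : Type) [AddCommGroup L] [Module k L]
    (ρ : L →ₗ[k] C ⊗[k] L) (hL : IsComod k C ρ) :
    FinCogen k C ρ ↔
      ∃ ρ' : ↥(maxSubcomodule k C ι ρ) →ₗ[k] E ⊗[k] ↥(maxSubcomodule k C ι ρ),
        CompatibleECoaction k C E ι ρ (maxSubcomodule k C ι ρ) ρ' ∧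
          IsComod k E ρ' ∧ FinCogen k E ρ' := by
  constructor
  · intro hFC
    exact ⟨PAux.canonCoaction ι ρ hL hι, PAux.canonCoaction_compat ι ρ hL hι,
      PAux.canonCoaction_isComod ι ρ hL hι,
      PAux.finCogen_forward ι ρ hL hι _ (PAux.canonCoaction_compat ι ρ hL hι) hFC⟩
  · rintro ⟨ρ', hcompat, _, hFC⟩
    exact PAux.finCogen_backward ι hι hconil ρ hL ρ' hcompat hFC
end

section
/- Let C be a coassociative counital coalgebra over a field k whose maximal cosemisimple subcoalgebra C^ss is finite-dimensional. Then any co-Noetherian left C-comodule is Artinian. -/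
open TensorProduct LinearMap

open TensorProduct LinearMap

section SubQuot

variable (k : Type) [Field k]
variable (C : Type) [AddCommGroup C] [Module k C] [Coalgebra k C]
variable {M : Type} [AddCommGroup M] [Module k M]

/-- A subspace `N ⊆ M` is a subcomodule if the coaction takes it into the image of
`C ⊗ N` in `C ⊗ M`. -/
def IsSubcomod (ρ : M →ₗ[k] C ⊗[k] M) (N : Submodule k M) : Prop :=
  ∀ m ∈ N, ρ m ∈ LinearMap.range (N.subtype.lTensor C)

/-- The quotient comodule `M/N` is finitely cogenerated; equivalently, there is a
morphism of comodules from `M` to a cofree comodule with a finite-dimensional space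
of cogenerators whose kernel is exactly `N`. -/
def QuotFinCogen (ρ : M →ₗ[k] C ⊗[k] M) (N : Submodule k M) : Prop :=
  ∃ (V : Type) (_ : AddCommGroup V) (_ : Module k V), FiniteDimensional k V ∧
    ∃ g : M →ₗ[k] C ⊗[k] V, IsComodHom k C ρ (cofreeCoaction k C V) g ∧
      LinearMap.ker g = N

/-- A comodule is co-Noetherian if all its quotient comodules are finitely
cogenerated. -/
def CoNoetherianComod (ρ : M →ₗ[k] C ⊗[k] M) : Prop :=
  ∀ N : Submodule k M, IsSubcomod k C ρ N → QuotFinCogen k C ρ N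

/-- A comodule is Artinian if every descending chain of its subcomodules
terminates. -/
def ArtinianComod (ρ : M →ₗ[k] C ⊗[k] M) : Prop :=
  ∀ f : ℕ → Submodule k M, (∀ n, IsSubcomod k C ρ (f n)) →
    (∀ n, f (n + 1) ≤ f n) → ∃ n, ∀ m, n ≤ m → f m = f n

end SubQuot

section MaxCosemisimple

variable (k : Type) [Field k]
variable (C : Type) [AddCommGroup C] [Module k C] [Coalgebra k C]

/-- A subspace `E ⊆ C` is a subcoalgebra if the comultiplication takes it into
the image of `E ⊗ E` in `C ⊗ C`. -/
def IsSubcoalgebra (E : Submodule k C) : Prop :=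
  ∀ x ∈ E, CoalgebraStruct.comul (R := k) (A := C) x ∈ tensorSub k C E E

/-- `E` is the maximal cosemisimple subcoalgebra `C^ss` of `C`: it is the minimal
subcoalgebra of `C` such that the quotient coalgebra without counit `C/E` is
conilpotent. -/
def IsMaxCosemisimple (E : Submodule k C) : Prop :=
  IsSubcoalgebra k C E ∧ ConilpotentQuotient k C E ∧
    ∀ E' : Submodule k C, IsSubcoalgebra k C E' → ConilpotentQuotient k C E' → E ≤ E'

end MaxCosemisimple

/-!
Let `N = ⋂ Nᵢ` for a descending chain of subcomodules `Nᵢ ⊆ M`. By co-Noetherianity there is a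
comodule map `g : M → C ⊗ V` with kernel `N` and `V` finite-dimensional. The elements of `C ⊗ V`
whose coaction has coefficients in `C^ss` lie in `C^ss ⊗ V` (apply the counit), so they form a
finite-dimensional subspace `Soc`, and conilpotency of `C / C^ss` shows that every nonzero
subcomodule of `C ⊗ V` meets `Soc`. The subspaces `g(Nᵢ) ∩ Soc` stabilize, and their stable value
lies in `⋂ g(Nᵢ) = g(N) = 0`. Hence eventually `g(Nᵢ) = 0`, that is `Nᵢ = N`.
-/

namespace TensorProduct

variable {R A A' W W' : Type*} [CommRing R] [AddCommGroup A] [Module R A]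
  [AddCommGroup A'] [Module R A'] [AddCommGroup W] [Module R W] [AddCommGroup W'] [Module R W']

noncomputable def evalLeft (φ : A →ₗ[R] R) : A ⊗[R] W →ₗ[R] W :=
  (TensorProduct.lid R W).toLinearMap ∘ₗ φ.rTensor W

@[simp]
lemma evalLeft_tmul (φ : A →ₗ[R] R) (a : A) (w : W) : evalLeft φ (a ⊗ₜ[R] w) = φ a • w := by
  simp [evalLeft]

lemma evalLeft_lTensor (φ : A →ₗ[R] R) (f : W →ₗ[R] W') (x : A ⊗[R] W) :
    evalLeft φ (f.lTensor A x) = f (evalLeft φ x) := by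
  induction x using TensorProduct.induction_on with
  | zero => simp
  | tmul a w => simp
  | add x y hx hy => simp [hx, hy]

lemma evalLeft_rTensor (q : A' →ₗ[R] A) (φ : A →ₗ[R] R) (x : A' ⊗[R] W) :
    evalLeft φ (q.rTensor W x) = evalLeft (φ ∘ₗ q) x := by
  induction x using TensorProduct.induction_on with
  | zero => simp
  | tmul a w => simp
  | add x y hx hy => simp [hx, hy]

lemma eq_zero_of_forall_evalLeft_eq_zero [Module.Free R A] {x : A ⊗[R] W}
    (h : ∀ φ : A →ₗ[R] R, evalLeft φ x = 0) : x = 0 := by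
  classical
  let b := Module.Free.chooseBasis R A
  let e := (TensorProduct.congr b.repr (LinearEquiv.refl R W)).trans
    (TensorProduct.finsuppScalarLeft R W _)
  have he : ∀ y i, e y i = evalLeft (b.coord i) y := by
    intro y i
    induction y using TensorProduct.induction_on with
    | zero => simp
    | tmul a w => simp [e, finsuppScalarLeft_apply_tmul_apply]
    | add y z hy hz => simp [hy, hz]
  exact e.map_eq_zero_iff.1 (Finsupp.ext fun i => by simp [he, h])

lemma mem_range_lTensor_subtype_iff [Module.Free R A] {P : Submodule R W} {x : A ⊗[R] W} :
    x ∈ LinearMap.range (P.subtype.lTensor A) ↔ ∀ φ : A →ₗ[R] R, evalLeft φ x ∈ P := by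
  simp_rw [← _root_.lTensor_mkQ, LinearMap.mem_ker, ← Submodule.Quotient.mk_eq_zero,
    ← Submodule.mkQ_apply, ← evalLeft_lTensor]
  exact ⟨fun h φ => by rw [h, map_zero], eq_zero_of_forall_evalLeft_eq_zero⟩

lemma mem_range_rTensor_subtype_of_forall {S : Submodule R A} [Module.Free R (A ⧸ S)]
    {x : A ⊗[R] W} (h : ∀ φ : A →ₗ[R] R, (∀ s ∈ S, φ s = 0) → evalLeft φ x = 0) :
    x ∈ LinearMap.range (S.subtype.rTensor W) := by
  rw [← _root_.rTensor_mkQ, LinearMap.mem_ker]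
  refine eq_zero_of_forall_evalLeft_eq_zero fun ψ => ?_
  rw [evalLeft_rTensor]
  exact h _ fun s hs => by simp [(Submodule.Quotient.mk_eq_zero S).2 hs]

end TensorProduct

namespace Submodule

variable {K W : Type*} [DivisionRing K] [AddCommGroup W] [Module K W]

lemma exists_inf_eq_of_antitone (F : Submodule K W) [FiniteDimensional K F]
    {S : ℕ → Submodule K W} (hS : Antitone S) : ∃ n, ∀ m, n ≤ m → S m ⊓ F = S n ⊓ F := by
  obtain ⟨n, hn⟩ := IsArtinian.monotone_stabilizes
    ⟨fun i => OrderDual.toDual ((S i).comap F.subtype), fun _ _ h => comap_mono (hS h)⟩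
  refine ⟨n, fun m hm => ?_⟩
  have h : (S m).comap F.subtype = (S n).comap F.subtype := (hn m hm).symm
  simpa only [map_comap_subtype, inf_comm] using congrArg (map F.subtype) h

variable {R M N : Type*} [Ring R] [AddCommGroup M] [Module R M] [AddCommGroup N] [Module R N]

lemma iInf_map_le_map_iInf {ι : Type*} [Nonempty ι] {f : M →ₗ[R] N} {p : ι → Submodule R M}
    (h : ∀ i, LinearMap.ker f ≤ p i) : ⨅ i, (p i).map f ≤ (⨅ i, p i).map f := by
  intro y hy
  rw [mem_iInf] at hy
  obtain ⟨m, -, rfl⟩ := hy (Classical.arbitrary ι)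
  refine ⟨m, (mem_iInf _).2 fun i => ?_, rfl⟩
  obtain ⟨mi, hmi, he⟩ := hy i
  have hdiff : m - mi ∈ p i := h i (by simp [he])
  simpa using add_mem hdiff hmi

end Submodule

section Subcomodules

variable {k C M N : Type} [Field k] [AddCommGroup C] [Module k C]
  [AddCommGroup M] [Module k M] [AddCommGroup N] [Module k N]

lemma isSubcomod_iInf {ι : Type*} {ρ : M →ₗ[k] C ⊗[k] M} {f : ι → Submodule k M}
    (hf : ∀ i, IsSubcomod k C ρ (f i)) : IsSubcomod k C ρ (⨅ i, f i) := by
  intro m hm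
  rw [Submodule.mem_iInf] at hm
  refine mem_range_lTensor_subtype_iff.2 fun φ => (Submodule.mem_iInf _).2 fun i => ?_
  exact mem_range_lTensor_subtype_iff.1 (hf i m (hm i)) φ

lemma IsSubcomod.map {ρM : M →ₗ[k] C ⊗[k] M} {ρN : N →ₗ[k] C ⊗[k] N} {g : M →ₗ[k] N}
    (hg : IsComodHom k C ρM ρN g) {P : Submodule k M} (hP : IsSubcomod k C ρM P) :
    IsSubcomod k C ρN (P.map g) := by
  rintro _ ⟨m, hm, rfl⟩
  refine mem_range_lTensor_subtype_iff.2 fun φ => ?_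
  rw [← LinearMap.comp_apply (f := ρN), ← hg, LinearMap.comp_apply, evalLeft_lTensor]
  exact Submodule.mem_map_of_mem (mem_range_lTensor_subtype_iff.1 (hP m hm) φ)

end Subcomodules

section Cofree

variable {k C V : Type} [Field k] [AddCommGroup C] [Module k C] [AddCommGroup V] [Module k V]

-- The analogue of `maxSubcomodule` for a subcoalgebra given as a subspace `E ⊆ C`.
def coactionPreimage {M : Type} [AddCommGroup M] [Module k M] (E : Submodule k C)
    (ρ : M →ₗ[k] C ⊗[k] M) : Submodule k M :=
  Submodule.comap ρ (LinearMap.range (E.subtype.rTensor M))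

lemma tensorSub_mono {A A' B B' : Submodule k C} (hA : A ≤ A') (hB : B ≤ B') :
    tensorSub k C A B ≤ tensorSub k C A' B' := by
  rintro _ ⟨t, rfl⟩
  exact ⟨TensorProduct.map (Submodule.inclusion hA) (Submodule.inclusion hB) t, by
    rw [← LinearMap.comp_apply, ← TensorProduct.map_comp]; rfl⟩

lemma assoc_tmul_mem_of_mem_tensorSub {P Q : Submodule k C} {p : C ⊗[k] C}
    (hp : p ∈ tensorSub k C P Q) (v : V) :
    TensorProduct.assoc k C C V (p ⊗ₜ[k] v) ∈ LinearMap.range (P.subtype.rTensor (C ⊗[k] V)) ⊓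
      LinearMap.range ((Q.subtype.rTensor V).lTensor C) := by
  obtain ⟨t, rfl⟩ := hp
  induction t using TensorProduct.induction_on with
  | zero => simp
  | tmul a b =>
    exact ⟨⟨a ⊗ₜ[k] (Q.subtype b ⊗ₜ[k] v), by simp⟩, ⟨P.subtype a ⊗ₜ[k] (b ⊗ₜ[k] v), by simp⟩⟩
  | add t₁ t₂ h₁ h₂ =>
    rw [map_add, add_tmul, map_add]
    exact add_mem h₁ h₂

variable [Coalgebra k C]

lemma lTensor_evalLeft_counit_comp_cofreeCoaction :
    (evalLeft (Coalgebra.counit (R := k) (A := C))).lTensor C ∘ₗ cofreeCoaction k C V =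
      LinearMap.id := by
  have hassoc : (evalLeft (Coalgebra.counit (R := k) (A := C))).lTensor C ∘ₗ
      (TensorProduct.assoc k C C V).toLinearMap =
        ((TensorProduct.rid k C).toLinearMap ∘ₗ Coalgebra.counit.lTensor C).rTensor V := by
    ext
    simp [TensorProduct.smul_tmul']
  have hcounit : (TensorProduct.rid k C).toLinearMap ∘ₗ Coalgebra.counit.lTensor C ∘ₗ
      Coalgebra.comul = LinearMap.id := by
    ext c
    simp [Coalgebra.lTensor_counit_comul]
  rw [cofreeCoaction, ← LinearMap.comp_assoc, hassoc, ← LinearMap.rTensor_comp,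
    LinearMap.comp_assoc, hcounit, LinearMap.rTensor_id]

lemma coactionPreimage_cofree_le (E : Submodule k C) :
    coactionPreimage E (cofreeCoaction k C V) ≤ LinearMap.range (E.subtype.rTensor V) := by
  rintro x ⟨z, hz⟩
  refine ⟨(evalLeft (Coalgebra.counit (R := k) (A := C))).lTensor E z, ?_⟩
  rw [← LinearMap.comp_apply, LinearMap.rTensor_comp_lTensor, ← LinearMap.lTensor_comp_rTensor,
    LinearMap.comp_apply, hz, ← LinearMap.comp_apply,
    lTensor_evalLeft_counit_comp_cofreeCoaction, LinearMap.id_apply]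

lemma finiteDimensional_coactionPreimage_cofree (E : Submodule k C) [FiniteDimensional k E]
    [FiniteDimensional k V] : FiniteDimensional k (coactionPreimage E (cofreeCoaction k C V)) :=
  Submodule.finiteDimensional_of_le (coactionPreimage_cofree_le E)

lemma cofreeCoaction_mem_sup {A P R : Submodule k C}
    (hA : ∀ a ∈ A, Coalgebra.comul (R := k) a ∈ tensorSub k C P ⊤ ⊔ tensorSub k C ⊤ R)
    {x : C ⊗[k] V} (hx : x ∈ LinearMap.range (A.subtype.rTensor V)) :
    cofreeCoaction k C V x ∈ LinearMap.range (P.subtype.rTensor (C ⊗[k] V)) ⊔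
      LinearMap.range ((R.subtype.rTensor V).lTensor C) := by
  obtain ⟨y, rfl⟩ := hx
  induction y using TensorProduct.induction_on with
  | zero => simp
  | tmul a v =>
    obtain ⟨p, hp, q, hq, hpq⟩ := Submodule.mem_sup.1 (hA a a.2)
    have hsplit : cofreeCoaction k C V (A.subtype.rTensor V (a ⊗ₜ[k] v)) =
        TensorProduct.assoc k C C V (p ⊗ₜ[k] v) + TensorProduct.assoc k C C V (q ⊗ₜ[k] v) := by
      simp [cofreeCoaction, ← hpq, add_tmul]
    rw [hsplit]
    exact add_mem (Submodule.mem_sup_left (assoc_tmul_mem_of_mem_tensorSub hp v).1)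
      (Submodule.mem_sup_right (assoc_tmul_mem_of_mem_tensorSub hq v).2)
  | add y₁ y₂ h₁ h₂ =>
    rw [map_add, map_add]
    exact add_mem h₁ h₂

lemma conilChain_mono_s6 {E : Submodule k C} (hE : IsSubcoalgebra k C E) :
    Monotone (conilChain k C E) := by
  refine monotone_nat_of_le_succ fun n => ?_
  induction n with
  | zero => exact fun x hx => Submodule.mem_sup_left (tensorSub_mono le_rfl le_top (hE x hx))
  | succ n ih => exact Submodule.comap_mono (sup_le_sup_left (tensorSub_mono le_rfl ih) _)

lemma exists_mem_range_rTensor_conilChain {E : Submodule k C} (hE : IsSubcoalgebra k C E)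
    (hconil : ConilpotentQuotient k C E) (x : C ⊗[k] V) :
    ∃ n, x ∈ LinearMap.range ((conilChain k C E n).subtype.rTensor V) := by
  let D n := LinearMap.range ((conilChain k C E n).subtype.rTensor V)
  have hD : Monotone D := fun m n h => by
    rintro _ ⟨z, rfl⟩
    refine ⟨(Submodule.inclusion (conilChain_mono_s6 hE h)).rTensor V z, ?_⟩
    rw [← LinearMap.comp_apply, ← LinearMap.rTensor_comp, Submodule.subtype_comp_inclusion]
  refine (Submodule.mem_iSup_of_directed D hD.directed_le).1 ?_
  induction x using TensorProduct.induction_on with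
  | zero => exact zero_mem _
  | tmul c v =>
    obtain ⟨n, hn⟩ := hconil c
    exact Submodule.mem_iSup_of_mem n ⟨⟨c, hn⟩ ⊗ₜ[k] v, rfl⟩
  | add x y hx hy => exact add_mem hx hy

-- Contracting the coaction of `x` with any `φ` killing `E` lands in `Q ⊓ (R ⊗ V) = ⊥`.
lemma mem_coactionPreimage_of_cofreeCoaction_mem_sup {E R : Submodule k C}
    {Q : Submodule k (C ⊗[k] V)} (hQ : IsSubcomod k C (cofreeCoaction k C V) Q)
    (hQR : Q ⊓ LinearMap.range (R.subtype.rTensor V) = ⊥) {x : C ⊗[k] V} (hxQ : x ∈ Q)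
    (hx : cofreeCoaction k C V x ∈ LinearMap.range (E.subtype.rTensor (C ⊗[k] V)) ⊔
      LinearMap.range ((R.subtype.rTensor V).lTensor C)) :
    x ∈ coactionPreimage E (cofreeCoaction k C V) := by
  refine mem_range_rTensor_subtype_of_forall fun φ hφ => ?_
  have hφQ := mem_range_lTensor_subtype_iff.1 (hQ x hxQ) φ
  obtain ⟨_, ⟨p, rfl⟩, _, ⟨q, rfl⟩, hpq⟩ := Submodule.mem_sup.1 hx
  have hp : evalLeft φ (E.subtype.rTensor (C ⊗[k] V) p) = 0 := by
    rw [evalLeft_rTensor, show φ ∘ₗ E.subtype = 0 from LinearMap.ext fun e => hφ e e.2]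
    simp [evalLeft]
  rw [← hpq, map_add, hp, zero_add, evalLeft_lTensor] at hφQ ⊢
  have hmem : _ ∈ Q ⊓ LinearMap.range (R.subtype.rTensor V) := ⟨hφQ, ⟨_, rfl⟩⟩
  rwa [hQR, Submodule.mem_bot] at hmem

lemma eq_bot_of_inf_coactionPreimage_eq_bot {E : Submodule k C} (hE : IsSubcoalgebra k C E)
    (hconil : ConilpotentQuotient k C E) {Q : Submodule k (C ⊗[k] V)}
    (hQ : IsSubcomod k C (cofreeCoaction k C V) Q)
    (hQE : Q ⊓ coactionPreimage E (cofreeCoaction k C V) = ⊥) : Q = ⊥ := by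
  have hchain : ∀ n, Q ⊓ LinearMap.range ((conilChain k C E n).subtype.rTensor V) = ⊥ := by
    intro n
    induction n with
    | zero =>
      refine eq_bot_iff.2 fun x ⟨hxQ, hx⟩ => hQE ▸ ⟨hxQ, ?_⟩
      refine mem_coactionPreimage_of_cofreeCoaction_mem_sup (R := ⊥) hQ ?_ hxQ
        (cofreeCoaction_mem_sup (fun a ha => ?_) hx)
      · simp [LinearMap.range_eq_bot.2 (Subsingleton.elim _ 0)]
      · exact Submodule.mem_sup_left (tensorSub_mono le_rfl le_top (hE a ha))
    | succ n ih =>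
      refine eq_bot_iff.2 fun x ⟨hxQ, hx⟩ => hQE ▸ ⟨hxQ, ?_⟩
      exact mem_coactionPreimage_of_cofreeCoaction_mem_sup hQ ih hxQ
        (cofreeCoaction_mem_sup (fun a ha => ha) hx)
  refine eq_bot_iff.2 fun x hx => ?_
  obtain ⟨n, hn⟩ := exists_mem_range_rTensor_conilChain hE hconil x
  exact hchain n ▸ ⟨hx, hn⟩

end Cofree

theorem coNoetherian_comodule_artinian_general
    (k : Type) [Field k]
    (C : Type) [AddCommGroup C] [Module k C] [Coalgebra k C]
    (Css : Submodule k C) (hss : IsMaxCosemisimple k C Css)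
    (hfin : FiniteDimensional k ↥Css)
    (M : Type) [AddCommGroup M] [Module k M]
    (ρ : M →ₗ[k] C ⊗[k] M)
    (hco : CoNoetherianComod k C ρ) :
    ArtinianComod k C ρ := by
  intro f hf hdesc
  obtain ⟨hE, hconil, -⟩ := hss
  have hanti : Antitone f := antitone_nat_of_succ_le hdesc
  obtain ⟨V, _, _, _, g, hg, hker⟩ := hco (⨅ i, f i) (isSubcomod_iInf hf)
  let Soc := coactionPreimage Css (cofreeCoaction k C V)
  have : FiniteDimensional k Soc := finiteDimensional_coactionPreimage_cofree Css
  obtain ⟨n, hn⟩ :=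
    Soc.exists_inf_eq_of_antitone fun i j h => Submodule.map_mono (f := g) (hanti h)
  have hker_le : ∀ i, LinearMap.ker g ≤ f i := fun i => hker ▸ iInf_le f i
  have hstable : (f n).map g ⊓ Soc = ⊥ := by
    refine eq_bot_iff.2 fun x hx => ?_
    have hall : x ∈ ⨅ i, (f i).map g := Submodule.mem_iInf _ |>.2 fun i => by
      rcases le_total i n with h | h
      · exact Submodule.map_mono (hanti h) hx.1
      · exact (hn i h ▸ hx).1
    have := Submodule.iInf_map_le_map_iInf hker_le hall
    rwa [← hker, LinearMap.le_ker_iff_map.1 le_rfl] at this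
  have hfm : ∀ m, n ≤ m → f m = ⨅ i, f i := fun m hm =>
    le_antisymm (hker ▸ LinearMap.le_ker_iff_map.2 (eq_bot_of_inf_coactionPreimage_eq_bot hE
      hconil ((hf m).map hg) ((hn m hm).trans hstable))) (iInf_le f m)
  exact ⟨n, fun m hm => (hfm m hm).trans (hfm n le_rfl).symm⟩

/-- Lemma 1.4(b): if the maximal cosemisimple subcoalgebra `C^ss ⊆ C` is
finite-dimensional, then any co-Noetherian left `C`-comodule is Artinian. -/
theorem coNoetherian_comodule_artinian
    (k : Type) [Field k]
    (C : Type) [AddCommGroup C] [Module k C] [Coalgebra k C]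
    (Css : Submodule k C) (hss : IsMaxCosemisimple k C Css)
    (hfin : FiniteDimensional k ↥Css)
    (M : Type) [AddCommGroup M] [Module k M]
    (ρ : M →ₗ[k] C ⊗[k] M) (hM : IsComod k C ρ)
    (hco : CoNoetherianComod k C ρ) :
    ArtinianComod k C ρ :=
  coNoetherian_comodule_artinian_general k C Css hss hfin M ρ hco
end
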